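/- arXiv:2509.24600 — 3 statements merged into one kernel-verified Lean document; each statement's English description precedes it below -/
import Mathlib

section
/- For any two finite simple graphs G and H, the Shannon capacity of their disjoint union equals the sum of their capacities if and only if the Shannon capacity of their strong product equals the product of their capacities. -/
namespace Paper

def strongProd {V W : Type*} (G : SimpleGraph V) (H : SimpleGraph W) : SimpleGraph (V × W) :=
  SimpleGraph.fromRel (fun x y =>
    (x.1 = y.1 ∨ G.Adj x.1 y.1) ∧ (x.2 = y.2 ∨ H.Adj x.2 y.2))

def strongPow {V : Type*} (G : SimpleGraph V) (k : ℕ) : SimpleGraph (Fin k → V) :=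
  SimpleGraph.fromRel (fun x y => ∀ i, x i = y i ∨ G.Adj (x i) (y i))

noncomputable def indepNum {V : Type*} [Fintype V] (G : SimpleGraph V) : ℕ :=
  sSup {n | ∃ s : Finset V, (∀ a ∈ s, ∀ b ∈ s, a ≠ b → ¬ G.Adj a b) ∧ s.card = n}

noncomputable def shannonCapacity {V : Type*} [Fintype V] (G : SimpleGraph V) : ℝ :=
  ⨆ k : ℕ, (indepNum (strongPow G (k + 1)) : ℝ) ^ ((1 : ℝ) / (k + 1))

noncomputable def lovaszTheta {V : Type*} [Fintype V] (G : SimpleGraph V) : ℝ :=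
  sSup {x : ℝ | ∃ B : Matrix V V ℝ, B.PosSemidef ∧ B.trace = 1 ∧
    (∀ i j, G.Adj i j → B i j = 0) ∧ x = ∑ i, ∑ j, B i j}

noncomputable def fracIndepNum {V : Type*} [Fintype V] (G : SimpleGraph V) : ℝ :=
  sSup {x : ℝ | ∃ f : V → ℝ, (∀ v, 0 ≤ f v) ∧
    (∀ s : Finset V, G.IsClique (s : Set V) → ∑ v ∈ s, f v ≤ 1) ∧ x = ∑ v, f v}

def Universal {V : Type*} [Fintype V] (G : SimpleGraph V) : Prop :=
  ∀ (W : Type) [Fintype W] (H : SimpleGraph W),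
    indepNum (strongProd G H) = indepNum G * indepNum H

def sigmaUnion {ι : Type*} {V : ι → Type*} (G : ∀ i, SimpleGraph (V i)) :
    SimpleGraph (Σ i, V i) :=
  SimpleGraph.fromRel (fun x y =>
    ∃ i, ∃ a b : V i, (G i).Adj a b ∧ x = ⟨i, a⟩ ∧ y = ⟨i, b⟩)

def piStrongProd {ι : Type*} {V : ι → Type*} (G : ∀ i, SimpleGraph (V i)) :
    SimpleGraph (∀ i, V i) :=
  SimpleGraph.fromRel (fun x y => ∀ i, x i = y i ∨ (G i).Adj (x i) (y i))

def tadpole (k l : ℕ) : SimpleGraph (Fin (k + l)) :=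
  SimpleGraph.fromRel (fun x y =>
    ((x : ℕ) < k ∧ (y : ℕ) < k ∧ ((x : ℕ) + 1) % k = (y : ℕ)) ∨
    (k ≤ (x : ℕ) ∧ (y : ℕ) = (x : ℕ) + 1) ∨
    ((x : ℕ) = 0 ∧ (y : ℕ) = k))

/-!
Replace each graph by its reflexive confusability relation: disjoint union, strong product and
strong power become `Sum.LiftRel`, `relProd` and `relPi`. Write `x = Θ(r)`, `y = Θ(s)`.

Capacity is supermultiplicative, so `Θ(r^n) = x^n`. It is also superadditive: the words of
length `n` over `V ⊕ W` with `k` letters from `V` contain `C(n, k)` mutually unrelated copies of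
`r^k ⊠ s^(n-k)`, whence `(x + y)^n ≤ (n + 1) Θ(r ⊕ s)^n`.

If `Θ(r ⊠ s) = x y`, then `Θ(r^a ⊠ s^b) ≤ x^a y^b`, because its product with
`Θ(r^b ⊠ s^a) ≥ x^b y^a` is at most `Θ((r ⊠ s)^(a+b)) = (x y)^(a+b)`. Sorting the words of an
independent set of `(r ⊕ s)^n` by the positions of their letters from `V` then gives
`α((r ⊕ s)^n) ≤ ∑_S x^|S| y^(n-|S|) = (x + y)^n`.

If `Θ(r ⊕ s) = x + y`, expand `(r ⊕ s)^2 ≅ r^2 ⊕ r ⊠ s ⊕ s ⊠ r ⊕ s^2`; superadditivity gives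
`x^2 + 2 Θ(r ⊠ s) + y^2 ≤ (x + y)^2`, i.e. `Θ(r ⊠ s) ≤ x y`.
-/

open Finset

section IndepNum

variable {V W : Type*}

def relProd (r : V → V → Prop) (s : W → W → Prop) : V × W → V × W → Prop :=
  fun x y => r x.1 y.1 ∧ s x.2 y.2

def relPi (ι : Type*) (r : V → V → Prop) : (ι → V) → (ι → V) → Prop :=
  fun x y => ∀ i, r (x i) (y i)

noncomputable def relIndepNum [Fintype V] (r : V → V → Prop) : ℕ :=
  sSup {n | ∃ s : Finset V, (s : Set V).Pairwise (fun a b => ¬ r a b) ∧ s.card = n}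

variable {r : V → V → Prop} {s : W → W → Prop} [Fintype V]

lemma bddAbove_indepCards (r : V → V → Prop) :
    BddAbove {n | ∃ s : Finset V, (s : Set V).Pairwise (fun a b => ¬ r a b) ∧ s.card = n} :=
  ⟨Fintype.card V, by rintro _ ⟨s, -, rfl⟩; exact card_le_univ s⟩

lemma card_le_relIndepNum {t : Finset V} (ht : (t : Set V).Pairwise fun a b => ¬ r a b) :
    t.card ≤ relIndepNum r :=
  le_csSup (bddAbove_indepCards r) ⟨t, ht, rfl⟩

lemma exists_card_eq_relIndepNum (r : V → V → Prop) :
    ∃ t : Finset V, (t : Set V).Pairwise (fun a b => ¬ r a b) ∧ t.card = relIndepNum r :=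
  Nat.sSup_mem (s := {n | ∃ t : Finset V, (t : Set V).Pairwise (fun a b => ¬ r a b) ∧ t.card = n})
    ⟨0, ∅, by simp⟩ (bddAbove_indepCards r)

lemma relIndepNum_le_card (r : V → V → Prop) : relIndepNum r ≤ Fintype.card V := by
  obtain ⟨t, -, ht⟩ := exists_card_eq_relIndepNum r
  exact ht ▸ card_le_univ t

lemma one_le_relIndepNum [Nonempty V] (r : V → V → Prop) : 1 ≤ relIndepNum r :=
  card_le_relIndepNum (t := {Classical.arbitrary V}) (by simp)

lemma relIndepNum_eq_card (X : Type*) [Fintype X] :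
    relIndepNum (fun a b : X => a = b) = Fintype.card X :=
  (relIndepNum_le_card _).antisymm (card_le_relIndepNum (t := univ) fun _ _ _ _ => id)

lemma card_le_relIndepNum_of_subset_range (f : r →r s) {t : Finset W}
    (ht : (t : Set W).Pairwise fun a b => ¬ s a b) (hsub : ∀ w ∈ t, ∃ v, f v = w) :
    t.card ≤ relIndepNum r := by
  classical
  choose g hg using hsub
  have hinj : Function.Injective fun w : t => g w w.2 := fun a b hab =>
    Subtype.ext (by simpa only [hg] using congrArg f hab)
  rw [← card_attach, ← card_image_of_injective _ hinj]
  refine card_le_relIndepNum ?_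
  rw [coe_image, hinj.injOn.pairwise_image]
  intro a _ b _ hab hrel
  exact ht a.2 b.2 (Subtype.coe_injective.ne hab) (by simpa only [hg] using f.map_rel hrel)

variable [Fintype W]

lemma relIndepNum_le_of_relEmbedding {r' : W → W → Prop} (f : r ↪r r') :
    relIndepNum r ≤ relIndepNum r' := by
  classical
  obtain ⟨t, ht, hcard⟩ := exists_card_eq_relIndepNum r
  rw [← hcard, ← card_image_of_injective t f.injective]
  refine card_le_relIndepNum ?_
  rw [coe_image, f.injective.injOn.pairwise_image]
  exact fun a ha b hb hab => by simpa [Function.onFun, f.map_rel_iff] using ht ha hb hab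

lemma relIndepNum_eq_of_relIso {r' : W → W → Prop} (f : r ≃r r') :
    relIndepNum r = relIndepNum r' :=
  le_antisymm (relIndepNum_le_of_relEmbedding f.toRelEmbedding)
    (relIndepNum_le_of_relEmbedding f.symm.toRelEmbedding)

lemma relIndepNum_mul_le (r : V → V → Prop) (s : W → W → Prop) :
    relIndepNum r * relIndepNum s ≤ relIndepNum (relProd r s) := by
  obtain ⟨t, ht, htr⟩ := exists_card_eq_relIndepNum r
  obtain ⟨u, hu, hus⟩ := exists_card_eq_relIndepNum s
  rw [← htr, ← hus, ← card_product]
  refine card_le_relIndepNum fun x hx y hy hxy hrel => ?_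
  simp only [coe_product, Set.mem_prod, mem_coe] at hx hy
  by_cases h₁ : x.1 = y.1
  · exact hu hx.2 hy.2 (fun h₂ => hxy (Prod.ext h₁ h₂)) hrel.2
  · exact ht hx.1 hy.1 h₁ hrel.1

lemma relIndepNum_pow_card_le (ι : Type*) [Fintype ι] [DecidableEq ι] (r : V → V → Prop) :
    relIndepNum r ^ Fintype.card ι ≤ relIndepNum (relPi ι r) := by
  obtain ⟨t, ht, htr⟩ := exists_card_eq_relIndepNum r
  have hcard : (Fintype.piFinset fun _ : ι => t).card = t.card ^ Fintype.card ι := by simp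
  rw [← htr, ← hcard]
  refine card_le_relIndepNum fun x hx y hy hxy hrel => ?_
  obtain ⟨i, hi⟩ := Function.ne_iff.1 hxy
  rw [mem_coe, Fintype.mem_piFinset] at hx hy
  exact ht (hx i) (hy i) hi (hrel i)

lemma relIndepNum_le_sum_of_cover {T : Type*} [Fintype T] {Y : T → Type*} [∀ t, Fintype (Y t)]
    {r' : ∀ t, Y t → Y t → Prop} (f : ∀ t, r' t →r r) (hcover : ∀ v, ∃ t w, f t w = v) :
    relIndepNum r ≤ ∑ t, relIndepNum (r' t) := by
  classical
  choose τ hτ using hcover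
  obtain ⟨I, hI, hcard⟩ := exists_card_eq_relIndepNum r
  rw [← hcard, card_eq_sum_card_fiberwise (f := τ) (t := univ) fun _ _ => mem_coe.2 (mem_univ _)]
  refine sum_le_sum fun t _ => card_le_relIndepNum_of_subset_range (f t)
    (hI.mono (coe_subset.2 (filter_subset _ _))) fun v hv => ?_
  obtain ⟨-, rfl⟩ := mem_filter.1 hv
  exact hτ v

end IndepNum

section RelIsos

variable {V W V' W' ι κ μ : Type*} {r : V → V → Prop} {s : W → W → Prop}
  {r' : V' → V' → Prop} {s' : W' → W' → Prop}

def relPiCongrRight (ι : Type*) (f : r ↪r r') : relPi ι r ↪r relPi ι r' where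
  toFun x := f ∘ x
  inj' := f.injective.comp_left
  map_rel_iff' := forall_congr' fun _ => f.map_rel_iff

def relPiCongrLeft (r : V → V → Prop) (e : ι ≃ κ) : relPi ι r ≃r relPi κ r where
  toEquiv := e.arrowCongr (Equiv.refl V)
  map_rel_iff' := by simp [relPi, e.forall_congr_left]

def relPiUnique (ι : Type*) [Unique ι] (r : V → V → Prop) : relPi ι r ≃r r where
  toEquiv := Equiv.funUnique ι V
  map_rel_iff' := by simp [relPi, Unique.forall_iff]

def relPiCurry (ι κ : Type*) (r : V → V → Prop) : relPi ι (relPi κ r) ≃r relPi (ι × κ) r where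
  toEquiv := (Equiv.curry ι κ V).symm
  map_rel_iff' := by simp [relPi, Prod.forall]

def relPiSum (ι κ : Type*) (r : V → V → Prop) :
    relPi (ι ⊕ κ) r ≃r relProd (relPi ι r) (relPi κ r) where
  toEquiv := Equiv.sumArrowEquivProdArrow ι κ V
  map_rel_iff' := by simp [relPi, relProd, Sum.forall]

def relPiProd (ι : Type*) (r : V → V → Prop) (s : W → W → Prop) :
    relPi ι (relProd r s) ≃r relProd (relPi ι r) (relPi ι s) where
  toEquiv := Equiv.arrowProdEquivProdArrow ι (fun _ => V) (fun _ => W)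
  map_rel_iff' := by simp [relPi, relProd, forall_and]

def relPiFinTwo (r : V → V → Prop) : relPi (Fin 2) r ≃r relProd r r where
  toEquiv := piFinTwoEquiv fun _ => V
  map_rel_iff' := by simp [relPi, relProd, Fin.forall_fin_two]

def relProdComm (r : V → V → Prop) (s : W → W → Prop) : relProd r s ≃r relProd s r where
  toEquiv := Equiv.prodComm V W
  map_rel_iff' := by simp [relProd, and_comm]

def relProdCongr (f : r ≃r r') (g : s ≃r s') : relProd r s ≃r relProd r' s' where
  toEquiv := f.toEquiv.prodCongr g.toEquiv
  map_rel_iff' := by simp [relProd, f.map_rel_iff, g.map_rel_iff]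

def relProdProdProdComm {X Y : Type*} (t : X → X → Prop) (u : Y → Y → Prop) :
    relProd (relProd r s) (relProd t u) ≃r relProd (relProd r t) (relProd s u) where
  toEquiv := Equiv.prodProdProdComm V W X Y
  map_rel_iff' := by simp [relProd, and_assoc, and_left_comm]

def liftRelProdDistrib {X : Type*} (r : V → V → Prop) (s : W → W → Prop) (t : X → X → Prop) :
    relProd (Sum.LiftRel r s) t ≃r Sum.LiftRel (relProd r t) (relProd s t) where
  toEquiv := Equiv.sumProdDistrib V W X
  map_rel_iff' := by rintro ⟨a | a, c⟩ ⟨b | b, d⟩ <;> simp [relProd]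

def prodLiftRelDistrib {X : Type*} (t : X → X → Prop) (r : V → V → Prop) (s : W → W → Prop) :
    relProd t (Sum.LiftRel r s) ≃r Sum.LiftRel (relProd t r) (relProd t s) where
  toEquiv := Equiv.prodSumDistrib X V W
  map_rel_iff' := by rintro ⟨c, a | a⟩ ⟨d, b | b⟩ <;> simp [relProd]

def liftRelOfIsEmptyLeft [IsEmpty V] (r : V → V → Prop) (s : W → W → Prop) :
    Sum.LiftRel r s ≃r s where
  toEquiv := Equiv.emptySum V W
  map_rel_iff' := by
    rintro (a | a) (b | b) <;> first | exact isEmptyElim a | exact isEmptyElim b | simp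

def liftRelOfIsEmptyRight [IsEmpty W] (r : V → V → Prop) (s : W → W → Prop) :
    Sum.LiftRel r s ≃r r where
  toEquiv := Equiv.sumEmpty V W
  map_rel_iff' := by
    rintro (a | a) (b | b) <;> first | exact isEmptyElim a | exact isEmptyElim b | simp

end RelIsos

section Patterns

variable {V W ι κ μ : Type*} (r : V → V → Prop) (s : W → W → Prop)

def sumPiEmbedding (e : ι ≃ κ ⊕ μ) :
    relProd (relPi κ r) (relPi μ s) ↪r relPi ι (Sum.LiftRel r s) where
  toFun p i := Sum.map p.1 p.2 (e i)
  inj' p q h := by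
    refine Prod.ext (funext fun k => ?_) (funext fun k => ?_)
    · simpa using congrFun h (e.symm (.inl k))
    · simpa using congrFun h (e.symm (.inr k))
  map_rel_iff' {p q} := by
    change (∀ i, Sum.LiftRel r s (Sum.map p.1 p.2 (e i)) (Sum.map q.1 q.2 (e i))) ↔ _
    simp [relPi, relProd, e.forall_congr_left, Sum.forall]

@[simp]
lemma sumPiEmbedding_apply (e : ι ≃ κ ⊕ μ) (p : (κ → V) × (μ → W)) (i : ι) :
    sumPiEmbedding r s e p i = Sum.map p.1 p.2 (e i) :=
  rfl

lemma exists_sumPiEmbedding_eq (e : ι ≃ κ ⊕ μ) (f : ι → V ⊕ W)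
    (hf : ∀ i, (f i).isLeft = (e i).isLeft) : ∃ p, sumPiEmbedding r s e p = f := by
  have hl : ∀ k, ∃ v, f (e.symm (.inl k)) = .inl v := fun _ =>
    Sum.isLeft_iff.1 ((hf _).trans (by simp))
  have hr : ∀ k, ∃ w, f (e.symm (.inr k)) = .inr w := fun _ =>
    Sum.isRight_iff.1 (Sum.isLeft_eq_false.1 ((hf _).trans (by simp)))
  choose g hg using hl
  choose g' hg' using hr
  refine ⟨(g, g'), funext fun i => ?_⟩
  obtain ⟨j, rfl⟩ := e.symm.surjective i
  rcases j with k | k <;> simp [hg, hg']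

variable [Fintype ι] [DecidableEq ι]

noncomputable def patternEquiv (S : Finset ι) {k l : ℕ} (hk : S.card = k) (hl : Sᶜ.card = l) :
    ι ≃ Fin k ⊕ Fin l :=
  (Equiv.sumCompl (· ∈ S)).symm.trans <| (S.equivFinOfCardEq hk).sumCongr <|
    (Equiv.subtypeEquivRight fun _ => mem_compl.symm).trans (Sᶜ.equivFinOfCardEq hl)

lemma isLeft_patternEquiv (S : Finset ι) {k l : ℕ} (hk : S.card = k) (hl : Sᶜ.card = l) (i : ι) :
    (patternEquiv S hk hl i).isLeft = decide (i ∈ S) := by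
  by_cases h : i ∈ S <;> simp [patternEquiv, h]

noncomputable def patternEmbedding (k : ℕ) :
    relProd (fun S S' : {S : Finset ι // S.card = k} => S = S')
        (relProd (relPi (Fin k) r) (relPi (Fin (Fintype.card ι - k)) s)) ↪r
      relPi ι (Sum.LiftRel r s) where
  toFun x := sumPiEmbedding r s (patternEquiv x.1.1 x.1.2 (by rw [card_compl, x.1.2])) x.2
  inj' := by
    rintro ⟨⟨S, hS⟩, p⟩ ⟨⟨S', hS'⟩, p'⟩ h
    obtain rfl : S = S' := Finset.ext fun i => by
      simpa [isLeft_patternEquiv] using congrArg (fun f => (f i).isLeft) h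
    exact Prod.ext rfl ((sumPiEmbedding r s _).injective h)
  map_rel_iff' := by
    rintro ⟨⟨S, hS⟩, p⟩ ⟨⟨S', hS'⟩, p'⟩
    refine ⟨fun h => ?_, ?_⟩
    · obtain rfl : S = S' := Finset.ext fun i => by
        have hi : Sum.LiftRel r s (sumPiEmbedding r s (patternEquiv S hS _) p i)
            (sumPiEmbedding r s (patternEquiv S' hS' _) p' i) := h i
        simpa [isLeft_patternEquiv] using hi.isLeft_congr
      exact ⟨rfl, (sumPiEmbedding r s _).map_rel_iff.1 h⟩
    · rintro ⟨h, hp⟩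
      cases h
      exact (sumPiEmbedding r s _).map_rel_iff.2 hp

end Patterns

lemma rpow_one_div_succ_le_iff {x C : ℝ} (hx : 0 ≤ x) (hC : 0 ≤ C) (k : ℕ) :
    x ^ ((1 : ℝ) / (k + 1)) ≤ C ↔ x ≤ C ^ (k + 1) := by
  rw [one_div, Real.rpow_inv_le_iff_of_pos hx hC (by positivity), ← Real.rpow_natCast]
  push_cast
  rfl

lemma rpow_one_div_succ_pow_mul {x : ℝ} (hx : 0 ≤ x) (k n : ℕ) :
    (x ^ ((1 : ℝ) / (k + 1))) ^ ((k + 1) * n) = x ^ n := by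
  rw [pow_mul, ← Real.rpow_natCast _ (k + 1), ← Real.rpow_mul hx]
  push_cast
  rw [one_div_mul_cancel (by positivity), Real.rpow_one]

section Capacity

variable {V W : Type*} [Fintype V] [Fintype W] {r : V → V → Prop} {s : W → W → Prop}

noncomputable def capacity (r : V → V → Prop) : ℝ :=
  ⨆ k : ℕ, (relIndepNum (relPi (Fin (k + 1)) r) : ℝ) ^ ((1 : ℝ) / (k + 1))

lemma capacity_nonneg (r : V → V → Prop) : 0 ≤ capacity r :=
  Real.iSup_nonneg fun _ => by positivity

lemma capacity_le {C : ℝ} (hC : 0 ≤ C) (h : ∀ n, (relIndepNum (relPi (Fin n) r) : ℝ) ≤ C ^ n) :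
    capacity r ≤ C :=
  ciSup_le fun k => (rpow_one_div_succ_le_iff (Nat.cast_nonneg _) hC k).2 (h (k + 1))

lemma relIndepNum_relPi_fin_le_card_pow (r : V → V → Prop) (n : ℕ) :
    (relIndepNum (relPi (Fin n) r) : ℝ) ≤ (Fintype.card V : ℝ) ^ n := by
  exact_mod_cast (relIndepNum_le_card _).trans_eq (Fintype.card_pi_const V n)

lemma relIndepNum_relPi_fin_le_capacity_pow (n : ℕ) :
    (relIndepNum (relPi (Fin n) r) : ℝ) ≤ capacity r ^ n := by
  cases n with
  | zero => simpa using relIndepNum_relPi_fin_le_card_pow r 0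
  | succ k =>
    have hbdd : BddAbove (Set.range fun k : ℕ =>
        (relIndepNum (relPi (Fin (k + 1)) r) : ℝ) ^ ((1 : ℝ) / (k + 1))) := by
      refine ⟨Fintype.card V, Set.forall_mem_range.2 fun k => ?_⟩
      exact (rpow_one_div_succ_le_iff (Nat.cast_nonneg _) (Nat.cast_nonneg _) k).2
        (relIndepNum_relPi_fin_le_card_pow r (k + 1))
    exact (rpow_one_div_succ_le_iff (Nat.cast_nonneg _) (capacity_nonneg r) k).1
      (le_ciSup hbdd k)

lemma relIndepNum_relPi_le_capacity_pow (ι : Type*) [Fintype ι] [DecidableEq ι] :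
    (relIndepNum (relPi ι r) : ℝ) ≤ capacity r ^ Fintype.card ι := by
  rw [relIndepNum_eq_of_relIso (relPiCongrLeft r (Fintype.equivFin ι))]
  exact relIndepNum_relPi_fin_le_capacity_pow _

lemma relIndepNum_le_capacity (r : V → V → Prop) : (relIndepNum r : ℝ) ≤ capacity r := by
  simpa [relIndepNum_eq_of_relIso (relPiUnique (Fin 1) r)] using
    relIndepNum_relPi_le_capacity_pow (r := r) (Fin 1)

lemma one_le_capacity [Nonempty V] (r : V → V → Prop) : 1 ≤ capacity r :=
  (Nat.one_le_cast.2 (one_le_relIndepNum r)).trans (relIndepNum_le_capacity r)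

lemma capacity_of_isEmpty [IsEmpty V] (r : V → V → Prop) : capacity r = 0 :=
  le_antisymm (capacity_le le_rfl fun n => by simpa using relIndepNum_relPi_fin_le_card_pow r n)
    (capacity_nonneg r)

lemma capacity_le_of_relEmbedding (f : r ↪r s) : capacity r ≤ capacity s :=
  capacity_le (capacity_nonneg s) fun n =>
    (Nat.cast_le.2 (relIndepNum_le_of_relEmbedding (relPiCongrRight (Fin n) f))).trans
      (relIndepNum_relPi_fin_le_capacity_pow n)

lemma capacity_eq_of_relIso (f : r ≃r s) : capacity r = capacity s :=
  le_antisymm (capacity_le_of_relEmbedding f.toRelEmbedding)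
    (capacity_le_of_relEmbedding f.symm.toRelEmbedding)

end Capacity

section Products

variable {V W : Type*} [Fintype V] [Fintype W] (r : V → V → Prop) (s : W → W → Prop)

lemma relIndepNum_relPi_pow_le (ι : Type*) [Fintype ι] [DecidableEq ι] (n : ℕ) :
    relIndepNum (relPi ι r) ^ n ≤ relIndepNum (relPi (ι × Fin n) r) := by
  rw [← relIndepNum_eq_of_relIso (relPiCongrLeft r (Equiv.prodComm (Fin n) ι)),
    ← relIndepNum_eq_of_relIso (relPiCurry (Fin n) ι r)]
  simpa using relIndepNum_pow_card_le (Fin n) (relPi ι r)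

theorem capacity_mul_le : capacity r * capacity s ≤ capacity (relProd r s) := by
  rw [capacity, Real.iSup_mul_of_nonneg (capacity_nonneg s)]
  refine ciSup_le fun j => ?_
  rw [capacity, Real.mul_iSup_of_nonneg (by positivity)]
  refine ciSup_le fun k => ?_
  -- compare the `(j + 1)`-th and `(k + 1)`-th roots at the common length `(j + 1) * (k + 1)`
  set P := Fin (j + 1) × Fin (k + 1)
  have hr : (relIndepNum (relPi (Fin (j + 1)) r) : ℝ) ^ (k + 1) ≤ relIndepNum (relPi P r) := by
    exact_mod_cast relIndepNum_relPi_pow_le r (Fin (j + 1)) (k + 1)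
  have hs : (relIndepNum (relPi (Fin (k + 1)) s) : ℝ) ^ (j + 1) ≤ relIndepNum (relPi P s) := by
    rw [relIndepNum_eq_of_relIso (relPiCongrLeft s (Equiv.prodComm _ _))]
    exact_mod_cast relIndepNum_relPi_pow_le s (Fin (k + 1)) (j + 1)
  have hP : (relIndepNum (relPi P r) : ℝ) * relIndepNum (relPi P s) ≤
      capacity (relProd r s) ^ ((j + 1) * (k + 1)) := by
    have h := relIndepNum_mul_le (relPi P r) (relPi P s)
    rw [← relIndepNum_eq_of_relIso (relPiProd P r s)] at h
    calc _ ≤ (relIndepNum (relPi P (relProd r s)) : ℝ) := by exact_mod_cast h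
      _ ≤ _ := by simpa [P] using relIndepNum_relPi_le_capacity_pow (r := relProd r s) P
  refine le_of_pow_le_pow_left₀ (by positivity : (j + 1) * (k + 1) ≠ 0) (capacity_nonneg _) ?_
  calc _ = (relIndepNum (relPi (Fin (j + 1)) r) : ℝ) ^ (k + 1) *
          (relIndepNum (relPi (Fin (k + 1)) s) : ℝ) ^ (j + 1) := by
        rw [mul_pow, rpow_one_div_succ_pow_mul (by positivity), mul_comm (j + 1),
          rpow_one_div_succ_pow_mul (by positivity)]
    _ ≤ _ := mul_le_mul hr hs (by positivity) (by positivity)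
    _ ≤ _ := hP

theorem capacity_relPi (n : ℕ) : capacity (relPi (Fin n) r) = capacity r ^ n := by
  refine le_antisymm (capacity_le (by positivity [capacity_nonneg r]) fun m => ?_) ?_
  · rw [← pow_mul, relIndepNum_eq_of_relIso (relPiCurry (Fin m) (Fin n) r)]
    simpa [mul_comm] using relIndepNum_relPi_le_capacity_pow (r := r) (Fin m × Fin n)
  induction n with
  | zero => simpa using one_le_capacity (relPi (Fin 0) r)
  | succ n ih =>
    calc capacity r ^ (n + 1) = capacity r ^ n * capacity (relPi (Fin 1) r) := by
          rw [pow_succ, capacity_eq_of_relIso (relPiUnique (Fin 1) r)]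
      _ ≤ capacity (relPi (Fin n) r) * capacity (relPi (Fin 1) r) :=
          mul_le_mul_of_nonneg_right ih (capacity_nonneg _)
      _ ≤ capacity (relProd (relPi (Fin n) r) (relPi (Fin 1) r)) := capacity_mul_le _ _
      _ = capacity (relPi (Fin (n + 1)) r) := by
          rw [← capacity_eq_of_relIso (relPiSum (Fin n) (Fin 1) r),
            capacity_eq_of_relIso (relPiCongrLeft r finSumFinEquiv)]

lemma card_mul_capacity_le (T : Type*) [Fintype T] :
    Fintype.card T * capacity r ≤ capacity (relProd (fun a b : T => a = b) r) :=
  calc (Fintype.card T : ℝ) * capacity r ≤ capacity (fun a b : T => a = b) * capacity r :=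
        mul_le_mul_of_nonneg_right ((Nat.cast_le.2 (relIndepNum_eq_card T).ge).trans
          (relIndepNum_le_capacity _)) (capacity_nonneg r)
    _ ≤ _ := capacity_mul_le _ _

lemma capacity_relProd_self : capacity (relProd r r) = capacity r ^ 2 := by
  rw [← capacity_eq_of_relIso (relPiFinTwo r), capacity_relPi]

end Products

lemma le_of_forall_pow_le_succ_mul_pow {t c : ℝ} (hc : 0 ≤ c)
    (h : ∀ n : ℕ, t ^ n ≤ (n + 1) * c ^ n) : t ≤ c := by
  by_contra! hct
  have ht0 : 0 < t := hc.trans_lt hct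
  have hq : c / t < 1 := (div_lt_one ht0).2 hct
  have hlim : Filter.Tendsto (fun n : ℕ => (n + 1) * (c / t) ^ n) Filter.atTop (nhds 0) := by
    simpa [add_mul] using (tendsto_self_mul_const_pow_of_lt_one (by positivity) hq).add
      (tendsto_pow_atTop_nhds_zero_of_lt_one (by positivity) hq)
  have hge : ∀ n : ℕ, 1 ≤ (n + 1) * (c / t) ^ n := fun n => by
    rw [div_pow, mul_div_assoc', le_div_iff₀ (pow_pos ht0 n), one_mul]
    exact h n
  linarith [ge_of_tendsto' hlim hge]

section Additivity

variable {V W : Type*} [Fintype V] [Fintype W] (r : V → V → Prop) (s : W → W → Prop)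

lemma relIndepNum_relPi_liftRel_le_sum (ι : Type*) [Fintype ι] [DecidableEq ι] :
    relIndepNum (relPi ι (Sum.LiftRel r s)) ≤ ∑ S : Finset ι,
      relIndepNum (relProd (relPi (Fin S.card) r) (relPi (Fin (Fintype.card ι - S.card)) s)) :=
  relIndepNum_le_sum_of_cover
    (fun S => (sumPiEmbedding r s (patternEquiv S rfl (card_compl S))).toRelHom) fun f =>
      ⟨univ.filter fun i => (f i).isLeft, exists_sumPiEmbedding_eq r s _ f fun i => by
        simp [isLeft_patternEquiv]⟩

lemma choose_mul_le_capacity_liftRel_pow (n k : ℕ) :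
    n.choose k * (capacity r ^ k * capacity s ^ (n - k)) ≤ capacity (Sum.LiftRel r s) ^ n := by
  have hembed := capacity_le_of_relEmbedding (patternEmbedding r s (ι := Fin n) k)
  rw [Fintype.card_fin] at hembed
  calc (n.choose k : ℝ) * (capacity r ^ k * capacity s ^ (n - k))
      = Fintype.card {S : Finset (Fin n) // S.card = k} *
          (capacity (relPi (Fin k) r) * capacity (relPi (Fin (n - k)) s)) := by
        rw [Fintype.card_finset_len, Fintype.card_fin, capacity_relPi, capacity_relPi]
    _ ≤ Fintype.card {S : Finset (Fin n) // S.card = k} *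
          capacity (relProd (relPi (Fin k) r) (relPi (Fin (n - k)) s)) :=
        mul_le_mul_of_nonneg_left (capacity_mul_le _ _) (Nat.cast_nonneg _)
    _ ≤ _ := card_mul_capacity_le _ _
    _ ≤ capacity (relPi (Fin n) (Sum.LiftRel r s)) := hembed
    _ = _ := capacity_relPi _ n

theorem capacity_add_le : capacity r + capacity s ≤ capacity (Sum.LiftRel r s) := by
  refine le_of_forall_pow_le_succ_mul_pow (capacity_nonneg _) fun n => ?_
  calc (capacity r + capacity s) ^ n
      = ∑ k ∈ range (n + 1), n.choose k * (capacity r ^ k * capacity s ^ (n - k)) := by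
        rw [add_pow]
        exact sum_congr rfl fun _ _ => by ring
    _ ≤ ∑ _k ∈ range (n + 1), capacity (Sum.LiftRel r s) ^ n :=
        sum_le_sum fun k _ => choose_mul_le_capacity_liftRel_pow r s n k
    _ = (n + 1) * capacity (Sum.LiftRel r s) ^ n := by simp

lemma capacity_relProd_relPi_le [Nonempty V] [Nonempty W]
    (h : capacity (relProd r s) = capacity r * capacity s) (a b : ℕ) :
    capacity (relProd (relPi (Fin a) r) (relPi (Fin b) s)) ≤ capacity r ^ a * capacity s ^ b := by
  have hswap : capacity r ^ b * capacity s ^ a ≤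
      capacity (relProd (relPi (Fin b) r) (relPi (Fin a) s)) := by
    simpa [capacity_relPi] using capacity_mul_le (relPi (Fin b) r) (relPi (Fin a) s)
  have hiso : relProd (relProd (relPi (Fin a) r) (relPi (Fin b) s))
      (relProd (relPi (Fin b) r) (relPi (Fin a) s)) ≃r relPi (Fin (a + b)) (relProd r s) :=
    ((relProdProdProdComm _ _).trans (relProdCongr (relPiSum _ _ r).symm
      ((relProdComm _ _).trans (relPiSum _ _ s).symm))).trans
      ((relPiProd _ r s).symm.trans (relPiCongrLeft _ finSumFinEquiv))
  have hprod : capacity (relProd (relPi (Fin a) r) (relPi (Fin b) s)) *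
      capacity (relProd (relPi (Fin b) r) (relPi (Fin a) s)) ≤
      capacity r ^ a * capacity s ^ b * (capacity r ^ b * capacity s ^ a) := by
    calc _ ≤ _ := capacity_mul_le _ _
      _ = capacity (relPi (Fin (a + b)) (relProd r s)) := capacity_eq_of_relIso hiso
      _ = _ := by rw [capacity_relPi, h]; ring
  have hpos : 0 < capacity r ^ b * capacity s ^ a := by
    have := one_le_capacity r
    have := one_le_capacity s
    positivity
  exact le_of_mul_le_mul_right
    (hprod.trans' (mul_le_mul_of_nonneg_left hswap (capacity_nonneg _))) hpos

lemma capacity_liftRel_le_of_mul (h : capacity (relProd r s) = capacity r * capacity s) :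
    capacity (Sum.LiftRel r s) ≤ capacity r + capacity s := by
  rcases isEmpty_or_nonempty V with hV | hV
  · rw [capacity_eq_of_relIso (liftRelOfIsEmptyLeft r s), capacity_of_isEmpty r, zero_add]
  rcases isEmpty_or_nonempty W with hW | hW
  · rw [capacity_eq_of_relIso (liftRelOfIsEmptyRight r s), capacity_of_isEmpty s, add_zero]
  refine capacity_le (by positivity [capacity_nonneg r, capacity_nonneg s]) fun n => ?_
  have hcover := relIndepNum_relPi_liftRel_le_sum r s (Fin n)
  rw [Fintype.card_fin] at hcover
  calc (relIndepNum (relPi (Fin n) (Sum.LiftRel r s)) : ℝ)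
      ≤ ∑ S : Finset (Fin n),
          (relIndepNum (relProd (relPi (Fin S.card) r) (relPi (Fin (n - S.card)) s)) : ℝ) := by
        exact_mod_cast hcover
    _ ≤ ∑ S : Finset (Fin n), capacity r ^ S.card * capacity s ^ (n - S.card) :=
        sum_le_sum fun S _ => (relIndepNum_le_capacity _).trans
          (capacity_relProd_relPi_le r s h S.card (n - S.card))
    _ = _ := Fin.sum_pow_mul_eq_add_pow _ _

lemma capacity_relProd_le_of_add (h : capacity (Sum.LiftRel r s) = capacity r + capacity s) :
    capacity (relProd r s) ≤ capacity r * capacity s := by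
  set L := Sum.LiftRel r s
  have hsq : capacity r ^ 2 + 2 * capacity (relProd r s) + capacity s ^ 2 ≤
      (capacity r + capacity s) ^ 2 :=
    calc _ ≤ (capacity (relProd r r) + capacity (relProd r s)) +
          (capacity (relProd s r) + capacity (relProd s s)) := by
          have hr := capacity_mul_le r r
          have hs := capacity_mul_le s s
          rw [capacity_eq_of_relIso (relProdComm s r)]
          nlinarith
      _ ≤ capacity (Sum.LiftRel (relProd r r) (relProd r s)) +
          capacity (Sum.LiftRel (relProd s r) (relProd s s)) :=
          add_le_add (capacity_add_le _ _) (capacity_add_le _ _)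
      _ = capacity (relProd r L) + capacity (relProd s L) := by
          rw [capacity_eq_of_relIso (prodLiftRelDistrib r r s),
            capacity_eq_of_relIso (prodLiftRelDistrib s r s)]
      _ ≤ capacity (Sum.LiftRel (relProd r L) (relProd s L)) := capacity_add_le _ _
      _ = capacity (relProd L L) := (capacity_eq_of_relIso (liftRelProdDistrib r s L)).symm
      _ = _ := by rw [capacity_relProd_self, h]
  nlinarith

theorem capacity_liftRel_eq_add_iff :
    capacity (Sum.LiftRel r s) = capacity r + capacity s ↔
      capacity (relProd r s) = capacity r * capacity s :=
  ⟨fun h => le_antisymm (capacity_relProd_le_of_add r s h) (capacity_mul_le r s),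
    fun h => le_antisymm (capacity_liftRel_le_of_mul r s h) (capacity_add_le r s)⟩

end Additivity

section Graphs

variable {V W : Type*}

def confusable (G : SimpleGraph V) (a b : V) : Prop := a = b ∨ G.Adj a b

lemma relIndepNum_congr_of_ne [Fintype V] {r r' : V → V → Prop}
    (h : ∀ a b, a ≠ b → (r a b ↔ r' a b)) :
    relIndepNum r = relIndepNum r' := by
  unfold relIndepNum
  congr! 6 with n t
  exact ⟨fun H a ha b hb hab => (h a b hab).not.1 (H ha hb hab),
    fun H a ha b hb hab => (h a b hab).not.2 (H ha hb hab)⟩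

lemma indepNum_strongPow [Fintype V] (G : SimpleGraph V) (k : ℕ) :
    indepNum (strongPow G k) = relIndepNum (relPi (Fin k) (confusable G)) :=
  relIndepNum_congr_of_ne fun x y hxy => by
    simp only [strongPow, SimpleGraph.fromRel_adj, ne_eq, hxy, not_false_eq_true, true_and,
      relPi, confusable]
    refine ⟨fun h => h.elim id fun h i => (h i).imp Eq.symm G.adj_symm, fun h => .inl h⟩

lemma shannonCapacity_eq_capacity [Fintype V] (G : SimpleGraph V) :
    shannonCapacity G = capacity (confusable G) := by
  simp only [shannonCapacity, capacity, indepNum_strongPow]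

lemma confusable_strongProd (G : SimpleGraph V) (H : SimpleGraph W) :
    confusable (strongProd G H) = relProd (confusable G) (confusable H) := by
  ext x y
  by_cases hxy : x = y
  · simp [confusable, relProd, hxy]
  · simp only [confusable, strongProd, SimpleGraph.fromRel_adj, relProd, hxy, false_or, ne_eq,
      not_false_eq_true, true_and]
    refine ⟨fun h => h.elim id fun h => ⟨?_, ?_⟩, .inl⟩
    · exact h.1.imp Eq.symm G.adj_symm
    · exact h.2.imp Eq.symm H.adj_symm

lemma confusable_sum (G : SimpleGraph V) (H : SimpleGraph W) :
    confusable (G ⊕g H) = Sum.LiftRel (confusable G) (confusable H) := by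
  ext (a | a) (b | b) <;> simp [confusable]

end Graphs

theorem capacity_sum_additive_iff_product_multiplicative
    {V W : Type*} [Fintype V] [Fintype W] (G : SimpleGraph V) (H : SimpleGraph W) :
    shannonCapacity (G ⊕g H) = shannonCapacity G + shannonCapacity H ↔
      shannonCapacity (strongProd G H) = shannonCapacity G * shannonCapacity H := by
  simp only [shannonCapacity_eq_capacity, confusable_sum, confusable_strongProd]
  exact capacity_liftRel_eq_add_iff _ _

end Paper
end

section
/- If G₁ is a finite simple graph with Θ(G₁) = α_f(G₁) (its Shannon capacity equals its fractional independence number), then for every finite simple graph G₂, Θ(G₁ + G₂) = Θ(G₁) + Θ(G₂). -/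
namespace Paper

section Infra

open SimpleGraph Finset

variable {V W X Y : Type*}

lemma strongProd_adj (G : SimpleGraph V) (H : SimpleGraph W) (x y : V × W) :
    (strongProd G H).Adj x y ↔
      x ≠ y ∧ (x.1 = y.1 ∨ G.Adj x.1 y.1) ∧ (x.2 = y.2 ∨ H.Adj x.2 y.2) := by
  constructor
  · rintro ⟨hne, h | h⟩
    · exact ⟨hne, h⟩
    · exact ⟨hne, h.1.imp Eq.symm (fun a => a.symm), h.2.imp Eq.symm (fun a => a.symm)⟩
  · rintro ⟨hne, h⟩
    exact ⟨hne, Or.inl h⟩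

lemma strongPow_adj (G : SimpleGraph V) (k : ℕ) (x y : Fin k → V) :
    (strongPow G k).Adj x y ↔ x ≠ y ∧ ∀ i, x i = y i ∨ G.Adj (x i) (y i) := by
  constructor
  · rintro ⟨hne, h | h⟩
    · exact ⟨hne, h⟩
    · exact ⟨hne, fun i => (h i).imp Eq.symm (fun a => a.symm)⟩
  · rintro ⟨hne, h⟩
    exact ⟨hne, Or.inl h⟩

/-- closure condition for products -/
lemma prod_cond (G : SimpleGraph V) (H : SimpleGraph W) (x y : V × W) :
    (x = y ∨ (strongProd G H).Adj x y) ↔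
      (x.1 = y.1 ∨ G.Adj x.1 y.1) ∧ (x.2 = y.2 ∨ H.Adj x.2 y.2) := by
  rw [strongProd_adj]
  constructor
  · rintro (rfl | ⟨_, h⟩)
    · exact ⟨Or.inl rfl, Or.inl rfl⟩
    · exact h
  · rintro h
    by_cases hxy : x = y
    · exact Or.inl hxy
    · exact Or.inr ⟨hxy, h⟩

lemma pow_cond (G : SimpleGraph V) (k : ℕ) (x y : Fin k → V) :
    (x = y ∨ (strongPow G k).Adj x y) ↔ ∀ i, x i = y i ∨ G.Adj (x i) (y i) := by
  rw [strongPow_adj]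
  constructor
  · rintro (rfl | ⟨_, h⟩)
    · exact fun i => Or.inl rfl
    · exact h
  · rintro h
    by_cases hxy : x = y
    · exact Or.inl hxy
    · exact Or.inr ⟨hxy, h⟩

lemma sum_cond_ll (G : SimpleGraph V) (H : SimpleGraph W) (a b : V) :
    ((Sum.inl a : V ⊕ W) = Sum.inl b ∨ (G ⊕g H).Adj (Sum.inl a) (Sum.inl b)) ↔
      (a = b ∨ G.Adj a b) := by
  simp [SimpleGraph.sum_adj]

lemma sum_cond_rr (G : SimpleGraph V) (H : SimpleGraph W) (a b : W) :
    ((Sum.inr a : V ⊕ W) = Sum.inr b ∨ (G ⊕g H).Adj (Sum.inr a) (Sum.inr b)) ↔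
      (a = b ∨ H.Adj a b) := by
  simp [SimpleGraph.sum_adj]

lemma sum_cond_lr (G : SimpleGraph V) (H : SimpleGraph W) (a : V) (b : W) :
    ¬ ((Sum.inl a : V ⊕ W) = Sum.inr b ∨ (G ⊕g H).Adj (Sum.inl a) (Sum.inr b)) := by
  simp [SimpleGraph.sum_adj]

/-! ### independence number API -/

def IsIndep (G : SimpleGraph V) (s : Finset V) : Prop :=
  ∀ a ∈ s, ∀ b ∈ s, a ≠ b → ¬ G.Adj a b

lemma bddAbove_indepSets [Fintype V] (G : SimpleGraph V) :
    BddAbove {n | ∃ s : Finset V, (∀ a ∈ s, ∀ b ∈ s, a ≠ b → ¬ G.Adj a b) ∧ s.card = n} := by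
  refine ⟨Fintype.card V, ?_⟩
  rintro n ⟨s, _, rfl⟩
  exact s.card_le_univ

lemma indepSets_nonempty [Fintype V] (G : SimpleGraph V) :
    {n | ∃ s : Finset V, (∀ a ∈ s, ∀ b ∈ s, a ≠ b → ¬ G.Adj a b) ∧ s.card = n}.Nonempty :=
  ⟨0, ∅, by simp, rfl⟩

lemma le_indepNum [Fintype V] (G : SimpleGraph V) {s : Finset V} (hs : IsIndep G s) :
    s.card ≤ indepNum G :=
  le_csSup (bddAbove_indepSets G) ⟨s, hs, rfl⟩

lemma indepNum_le [Fintype V] (G : SimpleGraph V) {n : ℕ}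
    (h : ∀ s : Finset V, IsIndep G s → s.card ≤ n) : indepNum G ≤ n :=
  csSup_le (indepSets_nonempty G) (by rintro m ⟨s, hs, rfl⟩; exact h s hs)

lemma exists_indep [Fintype V] (G : SimpleGraph V) :
    ∃ s : Finset V, IsIndep G s ∧ s.card = indepNum G :=
  Nat.sSup_mem (indepSets_nonempty G) (bddAbove_indepSets G)

lemma indepNum_le_card [Fintype V] (G : SimpleGraph V) : indepNum G ≤ Fintype.card V :=
  indepNum_le G (fun s _ => s.card_le_univ)

lemma IsIndep.subset {G : SimpleGraph V} {s t : Finset V} (h : IsIndep G s) (hts : t ⊆ s) :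
    IsIndep G t := fun a ha b hb => h a (hts ha) b (hts hb)

/-- core counting lemma: an injective, adjacency-reflecting map bounds the card of an
independent set by the independence number of the target. -/
lemma card_le_indepNum_of_map [Fintype Y] {P : SimpleGraph X} (Q : SimpleGraph Y)
    {s : Finset X} (hs : IsIndep P s) (φ : X → Y) (hinj : Set.InjOn φ s)
    (hrefl : ∀ x ∈ s, ∀ y ∈ s, x ≠ y → Q.Adj (φ x) (φ y) → P.Adj x y) :
    s.card ≤ indepNum Q := by
  classical
  have himg : IsIndep Q (s.image φ) := by
    intro a ha b hb hab hadj
    obtain ⟨x, hx, rfl⟩ := Finset.mem_image.1 ha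
    obtain ⟨y, hy, rfl⟩ := Finset.mem_image.1 hb
    have hxy : x ≠ y := fun e => hab (by rw [e])
    exact hs x hx y hy hxy (hrefl x hx y hy hxy hadj)
  calc s.card = (s.image φ).card := (Finset.card_image_of_injOn hinj).symm
    _ ≤ indepNum Q := le_indepNum Q himg

lemma indepNum_le_of_inj [Fintype X] [Fintype Y] {P : SimpleGraph X} (Q : SimpleGraph Y)
    (φ : X → Y) (hinj : Function.Injective φ)
    (hrefl : ∀ x y, Q.Adj (φ x) (φ y) → P.Adj x y) : indepNum P ≤ indepNum Q := by
  obtain ⟨s, hs, hcard⟩ := exists_indep P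
  rw [← hcard]
  exact card_le_indepNum_of_map Q hs φ (hinj.injOn) (fun x _ y _ hxy h => hrefl x y h)

lemma indepNum_congr [Fintype X] [Fintype Y] {P : SimpleGraph X} {Q : SimpleGraph Y}
    (e : X ≃ Y) (hadj : ∀ x y, P.Adj x y ↔ Q.Adj (e x) (e y)) : indepNum P = indepNum Q := by
  refine le_antisymm (indepNum_le_of_inj Q e e.injective (fun x y h => (hadj x y).2 h)) ?_
  refine indepNum_le_of_inj P e.symm e.symm.injective (fun x y h => ?_)
  have := (hadj (e.symm x) (e.symm y)).1 h
  simpa using this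

end Infra
section Hales

open SimpleGraph Finset

variable {V W : Type*}

lemma fracIndepNum_mem_nonneg [Fintype V] (G : SimpleGraph V) :
    (0 : ℝ) ∈ {x : ℝ | ∃ f : V → ℝ, (∀ v, 0 ≤ f v) ∧
      (∀ s : Finset V, G.IsClique (s : Set V) → ∑ v ∈ s, f v ≤ 1) ∧ x = ∑ v, f v} :=
  ⟨fun _ => 0, fun _ => le_refl 0, fun s _ => by simp, by simp⟩

lemma bddAbove_fracSets [Fintype V] (G : SimpleGraph V) :
    BddAbove {x : ℝ | ∃ f : V → ℝ, (∀ v, 0 ≤ f v) ∧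
      (∀ s : Finset V, G.IsClique (s : Set V) → ∑ v ∈ s, f v ≤ 1) ∧ x = ∑ v, f v} := by
  refine ⟨Fintype.card V, ?_⟩
  rintro x ⟨f, hf0, hfc, rfl⟩
  have h1 : ∀ v, f v ≤ 1 := by
    intro v
    have := hfc {v} (by simp [SimpleGraph.IsClique, Set.Pairwise])
    simpa using this
  calc ∑ v, f v ≤ ∑ _v : V, (1 : ℝ) := Finset.sum_le_sum (fun v _ => h1 v)
    _ = Fintype.card V := by simp

lemma fracIndepNum_nonneg [Fintype V] (G : SimpleGraph V) : 0 ≤ fracIndepNum G :=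
  le_csSup (bddAbove_fracSets G) (fracIndepNum_mem_nonneg G)

/-- Hales' inequality: `α(G ⊠ H) ≤ α_f(G) · α(H)`. -/
lemma hales [Fintype V] [Fintype W] (G : SimpleGraph V) (H : SimpleGraph W) :
    (indepNum (strongProd G H) : ℝ) ≤ fracIndepNum G * indepNum H := by
  classical
  obtain ⟨S, hS, hcard⟩ := exists_indep (strongProd G H)
  rw [← hcard]
  rcases S.eq_empty_or_nonempty with rfl | ⟨⟨v₀, w₀⟩, hvw₀⟩
  · simpa using mul_nonneg (fracIndepNum_nonneg G) (Nat.cast_nonneg (indepNum H))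
  -- W is nonempty, so indepNum H ≥ 1
  have hβ : 1 ≤ indepNum H := by
    have : IsIndep H {w₀} := by intro a ha b hb hab; simp_all
    simpa using le_indepNum H this
  have hβR : (0 : ℝ) < (indepNum H : ℝ) := by exact_mod_cast hβ
  set β : ℝ := (indepNum H : ℝ) with hβdef
  set f : V → ℝ := fun v => ((S.filter (fun p => p.1 = v)).card : ℝ) / β with hf
  -- key clique bound
  have key : ∀ Q : Finset V, G.IsClique (Q : Set V) →
      (S.filter (fun p => p.1 ∈ Q)).card ≤ indepNum H := by
    intro Q hQ
    refine card_le_indepNum_of_map H (hS.subset (S.filter_subset _)) Prod.snd ?_ ?_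
    · intro x hx y hy hxy
      simp only [Finset.coe_filter, Set.mem_setOf_eq] at hx hy
      by_contra hne
      have h1 : x.1 ≠ y.1 := fun e => hne (Prod.ext e hxy)
      have hadj : (strongProd G H).Adj x y := by
        rw [strongProd_adj]
        exact ⟨hne, Or.inr (hQ hx.2 hy.2 h1), Or.inl hxy⟩
      exact hS x hx.1 y hy.1 hne hadj
    · intro x hx y hy hxy hadj
      rw [Finset.mem_filter] at hx hy
      rw [strongProd_adj]
      refine ⟨hxy, ?_, Or.inr hadj⟩
      by_cases h1 : x.1 = y.1
      · exact Or.inl h1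
      · exact Or.inr (hQ hx.2 hy.2 h1)
  have hmem : ((S.card : ℝ) / β) ∈ {x : ℝ | ∃ f : V → ℝ, (∀ v, 0 ≤ f v) ∧
      (∀ s : Finset V, G.IsClique (s : Set V) → ∑ v ∈ s, f v ≤ 1) ∧ x = ∑ v, f v} := by
    refine ⟨f, fun v => by positivity, ?_, ?_⟩
    · intro Q hQ
      have h2 : ∀ v ∈ Q, (Finset.filter (fun a => a.1 = v) (S.filter (fun p => p.1 ∈ Q)))
          = S.filter (fun p => p.1 = v) := by
        intro v hv
        ext x
        simp only [Finset.mem_filter]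
        constructor
        · rintro ⟨⟨h1, _⟩, h3⟩; exact ⟨h1, h3⟩
        · rintro ⟨h1, h3⟩; exact ⟨⟨h1, h3 ▸ hv⟩, h3⟩
      have h3 : (S.filter (fun p => p.1 ∈ Q)).card
          = ∑ v ∈ Q, (S.filter (fun p => p.1 = v)).card := by
        rw [Finset.card_eq_sum_card_fiberwise
          (f := Prod.fst) (s := S.filter (fun p => p.1 ∈ Q)) (t := Q)
          (fun x hx => (Finset.mem_filter.1 (Finset.mem_coe.1 hx)).2)]
        exact Finset.sum_congr rfl (fun v hv => by rw [h2 v hv])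
      have h4 : (∑ v ∈ Q, ((S.filter (fun p => p.1 = v)).card : ℝ)) ≤ β := by
        rw [hβdef]
        exact_mod_cast h3 ▸ key Q hQ
      simp only [hf]
      rw [← Finset.sum_div, div_le_one hβR]
      exact h4
    · have h4 : S.card = ∑ v : V, (S.filter (fun p => p.1 = v)).card :=
        Finset.card_eq_sum_card_fiberwise (fun x _ => Finset.mem_univ _)
      simp only [hf, ← Finset.sum_div]
      congr 1
      exact_mod_cast h4
  have h5 : (S.card : ℝ) / β ≤ fracIndepNum G := le_csSup (bddAbove_fracSets G) hmem
  rw [div_le_iff₀ hβR] at h5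
  exact h5

end Hales
section Isos

open SimpleGraph Finset

variable {V W U κ : Type*}

/-- congruence via closure conditions -/
lemma indepNum_congr' [Fintype U] [Fintype κ] {P : SimpleGraph U} {Q : SimpleGraph κ}
    (e : U ≃ κ)
    (h : ∀ x y, (x = y ∨ P.Adj x y) ↔ (e x = e y ∨ Q.Adj (e x) (e y))) :
    indepNum P = indepNum Q := by
  refine indepNum_congr e (fun x y => ?_)
  constructor
  · intro ha
    rcases (h x y).1 (Or.inr ha) with he | ha'
    · exact absurd (e.injective he) (P.ne_of_adj ha)
    · exact ha'
  · intro ha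
    rcases (h x y).2 (Or.inr ha) with he | ha'
    · exact absurd (congrArg e he) (Q.ne_of_adj ha)
    · exact ha'

/-- peel the first coordinate: `α(P^{k+1} ⊠ K) = α(P ⊠ (P^k ⊠ K))`. -/
lemma alpha_peel [Fintype U] [Fintype κ] (P : SimpleGraph U) (K : SimpleGraph κ) (k : ℕ) :
    indepNum (strongProd (strongPow P (k + 1)) K)
      = indepNum (strongProd P (strongProd (strongPow P k) K)) := by
  refine indepNum_congr'
    (⟨fun z => (z.1 0, (fun i => z.1 i.succ, z.2)),
      fun z => (Fin.cons z.1 z.2.1, z.2.2),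
      fun z => Prod.ext (Fin.cons_self_tail z.1) rfl,
      fun z => by simp [Fin.tail]⟩ : _ ≃ _) (fun x y => ?_)
  simp only [prod_cond, pow_cond, Equiv.coe_fn_mk]
  rw [Fin.forall_fin_succ]
  tauto

/-- `α(P^0 ⊠ K) = α(K)`. -/
lemma alpha_pow_zero [Fintype U] [Fintype κ] (P : SimpleGraph U) (K : SimpleGraph κ) :
    indepNum (strongProd (strongPow P 0) K) = indepNum K := by
  refine indepNum_congr'
    (⟨fun z => z.2, fun c => (fun i => i.elim0, c),
      fun z => Prod.ext (funext fun i => i.elim0) rfl, fun c => rfl⟩ : _ ≃ _)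
    (fun x y => ?_)
  simp only [prod_cond, pow_cond, Equiv.coe_fn_mk]
  constructor
  · rintro ⟨-, h⟩; exact h
  · intro h; exact ⟨fun i => i.elim0, h⟩

/-- swap: `α(P ⊠ (Q ⊠ K)) = α(Q ⊠ (P ⊠ K))`. -/
lemma alpha_swap [Fintype U] [Fintype W] [Fintype κ] (P : SimpleGraph U) (Q : SimpleGraph W)
    (K : SimpleGraph κ) :
    indepNum (strongProd P (strongProd Q K)) = indepNum (strongProd Q (strongProd P K)) := by
  refine indepNum_congr'
    (⟨fun z => (z.2.1, (z.1, z.2.2)), fun z => (z.2.1, (z.1, z.2.2)),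
      fun z => rfl, fun z => rfl⟩ : _ ≃ _) (fun x y => ?_)
  simp only [prod_cond, Equiv.coe_fn_mk]
  tauto

/-- dropping a one-point factor. -/
lemma alpha_unit [Fintype U] (P : SimpleGraph U) :
    indepNum (strongProd P (⊥ : SimpleGraph PUnit)) = indepNum P := by
  refine indepNum_congr' (Equiv.prodPUnit U) (fun x y => ?_)
  rw [prod_cond]
  simp

/-- splitting over a disjoint sum factor. -/
lemma alpha_split [Fintype V] [Fintype W] [Fintype κ]
    (G : SimpleGraph V) (H : SimpleGraph W) (M : SimpleGraph κ) :
    indepNum (strongProd (G ⊕g H) M)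
      ≤ indepNum (strongProd G M) + indepNum (strongProd H M) := by
  classical
  obtain ⟨S, hS, hcard⟩ := exists_indep (strongProd (G ⊕g H) M)
  rw [← hcard]
  have hsplit : S.card = (S.filter (fun z => z.1.isLeft)).card
      + (S.filter (fun z => ¬ z.1.isLeft)).card :=
    (Finset.card_filter_add_card_filter_not _).symm
  rw [hsplit]
  have hL : (S.filter (fun z => z.1.isLeft)).card ≤ indepNum (strongProd G M) := by
    rcases (S.filter (fun z => z.1.isLeft)).eq_empty_or_nonempty with he | ⟨z₀, hz₀⟩
    · rw [he]; simp
    · obtain ⟨v₀, -⟩ : ∃ v : V, True := by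
        have hz2 := (Finset.mem_filter.1 hz₀).2
        rw [Sum.isLeft_iff] at hz2
        obtain ⟨v, -⟩ := hz2
        exact ⟨v, trivial⟩
      refine card_le_indepNum_of_map (strongProd G M) (hS.subset (S.filter_subset _))
        (fun z => ((z.1.getLeft?).getD v₀, z.2)) ?_ ?_
      · intro x hx y hy hxy
        simp only [Finset.coe_filter, Set.mem_setOf_eq] at hx hy
        rcases x with ⟨xl | xr, xm⟩
        · rcases y with ⟨yl | yr, ym⟩
          · simpa [Prod.ext_iff] using hxy
          · simp at hy
        · simp at hx
      · intro x hx y hy hxy hadj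
        rw [Finset.mem_filter] at hx hy
        rcases x with ⟨xl | xr, xm⟩
        · rcases y with ⟨yl | yr, ym⟩
          · rw [strongProd_adj] at hadj ⊢
            simp only [Sum.getLeft?_inl, Option.getD_some] at hadj
            exact ⟨hxy, (sum_cond_ll G H xl yl).2 hadj.2.1, hadj.2.2⟩
          · exact absurd hy.2 (by simp)
        · exact absurd hx.2 (by simp)
  have hR : (S.filter (fun z => ¬ z.1.isLeft)).card ≤ indepNum (strongProd H M) := by
    rcases (S.filter (fun z => ¬ z.1.isLeft)).eq_empty_or_nonempty with he | ⟨z₀, hz₀⟩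
    · rw [he]; simp
    · obtain ⟨w₀, -⟩ : ∃ w : W, True := by
        have hz2 := (Finset.mem_filter.1 hz₀).2
        rw [Sum.not_isLeft, Sum.isRight_iff] at hz2
        obtain ⟨w, -⟩ := hz2
        exact ⟨w, trivial⟩
      refine card_le_indepNum_of_map (strongProd H M) (hS.subset (S.filter_subset _))
        (fun z => ((z.1.getRight?).getD w₀, z.2)) ?_ ?_
      · intro x hx y hy hxy
        simp only [Finset.coe_filter, Set.mem_setOf_eq] at hx hy
        rcases x with ⟨xl | xr, xm⟩
        · simp at hx
        · rcases y with ⟨yl | yr, ym⟩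
          · simp at hy
          · simpa [Prod.ext_iff] using hxy
      · intro x hx y hy hxy hadj
        rw [Finset.mem_filter] at hx hy
        rcases x with ⟨xl | xr, xm⟩
        · exact absurd hx.2 (by simp)
        · rcases y with ⟨yl | yr, ym⟩
          · exact absurd hy.2 (by simp)
          · rw [strongProd_adj] at hadj ⊢
            simp only [Sum.getRight?_inr, Option.getD_some] at hadj
            exact ⟨hxy, (sum_cond_rr G H xr yr).2 hadj.2.1, hadj.2.2⟩
  exact Nat.add_le_add hL hR

end Isos
section Capacity

open SimpleGraph Finset

variable {V W : Type*}

lemma rpow_inv_nat (c : ℝ) (k : ℕ) (hc : 0 ≤ c) : ((c ^ (k+1)) ^ ((1:ℝ)/(k+1)) : ℝ) = c := by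
  rw [← Real.rpow_natCast c (k+1), ← Real.rpow_mul hc]
  push_cast
  rw [mul_one_div, div_self (by positivity), Real.rpow_one]

lemma rpow_inv_le {a C : ℝ} (ha : 0 ≤ a) (hC : 0 ≤ C) {k : ℕ} (h : a ≤ C ^ (k+1)) :
    a ^ ((1:ℝ)/(k+1)) ≤ C := by
  calc a ^ ((1:ℝ)/(k+1)) ≤ (C ^ (k+1)) ^ ((1:ℝ)/(k+1)) :=
        Real.rpow_le_rpow ha h (by positivity)
    _ = C := rpow_inv_nat C k hC

lemma le_pow_of_rpow_inv_le {a C : ℝ} (ha : 0 ≤ a) {k : ℕ} (h : a ^ ((1:ℝ)/(k+1)) ≤ C) :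
    a ≤ C ^ (k+1) := by
  have h0 : (0:ℝ) ≤ a ^ ((1:ℝ)/(k+1)) := Real.rpow_nonneg ha _
  calc a = (a ^ ((1:ℝ)/(k+1))) ^ (k+1) := by
        rw [← Real.rpow_natCast (a ^ ((1:ℝ)/(k+1))) (k+1), ← Real.rpow_mul ha]
        push_cast
        rw [one_div_mul_eq_div, div_self (by positivity), Real.rpow_one]
    _ ≤ C ^ (k+1) := pow_le_pow_left₀ h0 h _

lemma bddAbove_capacitySet [Fintype V] (P : SimpleGraph V) :
    BddAbove (Set.range fun k : ℕ =>
      (indepNum (strongPow P (k+1)) : ℝ) ^ ((1:ℝ)/(k+1))) := by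
  classical
  refine ⟨(Fintype.card V : ℝ), ?_⟩
  rintro x ⟨k, rfl⟩
  refine rpow_inv_le (Nat.cast_nonneg _) (Nat.cast_nonneg _) ?_
  have := indepNum_le_card (strongPow P (k+1))
  have hc : Fintype.card (Fin (k+1) → V) = Fintype.card V ^ (k+1) := by simp
  exact_mod_cast hc ▸ this

lemma le_capacity [Fintype V] (P : SimpleGraph V) (k : ℕ) :
    (indepNum (strongPow P (k+1)) : ℝ) ^ ((1:ℝ)/(k+1)) ≤ shannonCapacity P :=
  le_ciSup (bddAbove_capacitySet P) k

lemma capacity_nonneg_s1 [Fintype V] (P : SimpleGraph V) : 0 ≤ shannonCapacity P :=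
  Real.iSup_nonneg (fun _ => Real.rpow_nonneg (Nat.cast_nonneg _) _)

lemma alpha_le_capacity_pow [Fintype V] (P : SimpleGraph V) (k : ℕ) :
    (indepNum (strongPow P (k+1)) : ℝ) ≤ shannonCapacity P ^ (k+1) :=
  le_pow_of_rpow_inv_le (Nat.cast_nonneg _) (le_capacity P k)

lemma capacity_le_s1 [Fintype V] (P : SimpleGraph V) {C : ℝ} (hC : 0 ≤ C)
    (h : ∀ k : ℕ, (indepNum (strongPow P (k+1)) : ℝ) ≤ C ^ (k+1)) :
    shannonCapacity P ≤ C := by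
  unfold shannonCapacity
  exact ciSup_le (fun k => rpow_inv_le (Nat.cast_nonneg _) hC (h k))

end Capacity

section Master

open SimpleGraph Finset

universe u₁ u₂

lemma master {V : Type u₁} {W : Type u₂} [Fintype V] [Fintype W]
    (G : SimpleGraph V) (H : SimpleGraph W) :
    ∀ (k : ℕ) {κ : Type (max u₁ u₂)} [Fintype κ] (K : SimpleGraph κ),
      (indepNum (strongProd (strongPow (G ⊕g H) k) K) : ℝ) ≤
        ∑ j ∈ Finset.range (k+1), (k.choose j : ℝ) * fracIndepNum G ^ (k - j)
            * (indepNum (strongProd (strongPow H j) K) : ℝ) := by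
  intro k
  induction k with
  | zero =>
    intro κ _ K
    simp [alpha_pow_zero]
  | succ k ih =>
    intro κ _ K
    set F := fracIndepNum G with hF
    have hF0 : 0 ≤ F := fracIndepNum_nonneg G
    set α : ℕ → ℝ := fun j => (indepNum (strongProd (strongPow H j) K) : ℝ) with hα
    have hα0 : ∀ j, 0 ≤ α j := fun j => Nat.cast_nonneg _
    -- the two bound pieces
    have hGpart : (indepNum (strongProd G (strongProd (strongPow (G ⊕g H) k) K)) : ℝ)
        ≤ ∑ j ∈ Finset.range (k+1), (k.choose j : ℝ) * F ^ (k + 1 - j) * α j := by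
      rw [show indepNum (strongProd G (strongProd (strongPow (G ⊕g H) k) K))
          = indepNum (strongProd (strongPow (G ⊕g H) k) (strongProd G K)) from
          alpha_swap G (strongPow (G ⊕g H) k) K]
      calc (indepNum (strongProd (strongPow (G ⊕g H) k) (strongProd G K)) : ℝ)
          ≤ ∑ j ∈ Finset.range (k+1), (k.choose j : ℝ) * F ^ (k - j)
              * (indepNum (strongProd (strongPow H j) (strongProd G K)) : ℝ) := ih _
        _ ≤ ∑ j ∈ Finset.range (k+1), (k.choose j : ℝ) * F ^ (k - j) * (F * α j) := by
            refine Finset.sum_le_sum (fun j hj => ?_)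
            refine mul_le_mul_of_nonneg_left ?_ (by positivity)
            rw [show indepNum (strongProd (strongPow H j) (strongProd G K))
                = indepNum (strongProd G (strongProd (strongPow H j) K)) from
                (alpha_swap G (strongPow H j) K).symm]
            exact hales G (strongProd (strongPow H j) K)
        _ = ∑ j ∈ Finset.range (k+1), (k.choose j : ℝ) * F ^ (k + 1 - j) * α j := by
            refine Finset.sum_congr rfl (fun j hj => ?_)
            have hjk : j ≤ k := Nat.lt_succ_iff.1 (Finset.mem_range.1 hj)
            rw [show k + 1 - j = (k - j) + 1 from by omega, pow_succ]
            ring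
    have hHpart : (indepNum (strongProd H (strongProd (strongPow (G ⊕g H) k) K)) : ℝ)
        ≤ ∑ j ∈ Finset.range (k+1), (k.choose j : ℝ) * F ^ (k - j) * α (j+1) := by
      rw [show indepNum (strongProd H (strongProd (strongPow (G ⊕g H) k) K))
          = indepNum (strongProd (strongPow (G ⊕g H) k) (strongProd H K)) from
          alpha_swap H (strongPow (G ⊕g H) k) K]
      calc (indepNum (strongProd (strongPow (G ⊕g H) k) (strongProd H K)) : ℝ)
          ≤ ∑ j ∈ Finset.range (k+1), (k.choose j : ℝ) * F ^ (k - j)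
              * (indepNum (strongProd (strongPow H j) (strongProd H K)) : ℝ) := ih _
        _ = ∑ j ∈ Finset.range (k+1), (k.choose j : ℝ) * F ^ (k - j) * α (j+1) := by
            refine Finset.sum_congr rfl (fun j hj => ?_)
            have e : indepNum (strongProd (strongPow H j) (strongProd H K))
                = indepNum (strongProd (strongPow H (j+1)) K) := by
              rw [alpha_peel H K j, alpha_swap]
            rw [e]
    -- combine
    have step1 : (indepNum (strongProd (strongPow (G ⊕g H) (k+1)) K) : ℝ)
        ≤ (indepNum (strongProd G (strongProd (strongPow (G ⊕g H) k) K)) : ℝ)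
          + (indepNum (strongProd H (strongProd (strongPow (G ⊕g H) k) K)) : ℝ) := by
      rw [alpha_peel (G ⊕g H) K k]
      exact_mod_cast alpha_split G H (strongProd (strongPow (G ⊕g H) k) K)
    refine le_trans (le_trans step1 (add_le_add hGpart hHpart)) (le_of_eq ?_)
    -- binomial identity
    rw [Finset.sum_range_succ' (fun j => ((k+1).choose j : ℝ) * F ^ (k + 1 - j) * α j) (k+1)]
    have e1 : ∀ j ∈ Finset.range (k+1),
        (((k+1).choose (j+1) : ℝ)) * F ^ (k + 1 - (j+1)) * α (j+1)
          = (k.choose j : ℝ) * F ^ (k - j) * α (j+1)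
            + (k.choose (j+1) : ℝ) * F ^ (k - j) * α (j+1) := by
      intro j hj
      rw [Nat.choose_succ_succ, show k + 1 - (j+1) = k - j from by omega]
      push_cast
      ring
    rw [Finset.sum_congr rfl e1, Finset.sum_add_distrib]
    have e2 : ∑ j ∈ Finset.range (k+1), (k.choose (j+1) : ℝ) * F ^ (k - j) * α (j+1)
          + ((k+1).choose 0 : ℝ) * F ^ (k + 1 - 0) * α 0
        = ∑ j ∈ Finset.range (k+1), (k.choose j : ℝ) * F ^ (k + 1 - j) * α j := by
      rw [show ∑ j ∈ Finset.range (k+1), (k.choose j : ℝ) * F ^ (k+1-j) * α j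
          = ∑ j ∈ Finset.range (k+1+1), (k.choose j : ℝ) * F ^ (k+1-j) * α j from by
        rw [Finset.sum_range_succ (fun j => (k.choose j : ℝ) * F ^ (k+1-j) * α j) (k+1)]
        simp [Nat.choose_succ_self]]
      rw [Finset.sum_range_succ' (fun j => (k.choose j : ℝ) * F ^ (k + 1 - j) * α j) (k+1)]
      congr 1
      · refine Finset.sum_congr rfl (fun j hj => ?_)
        rw [show k + 1 - (j+1) = k - j from by omega]
      · simp
    rw [add_assoc, e2]
    ring_nf
    rw [add_comm]
    congr 1
    exact Finset.sum_congr rfl (fun x _ => by ring)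
end Master
section Upper

open SimpleGraph Finset

universe u₁ u₂

lemma alpha_powH_le {W : Type*} [Fintype W] (H : SimpleGraph W) (j : ℕ) :
    (indepNum (strongPow H j) : ℝ) ≤ shannonCapacity H ^ j := by
  cases j with
  | zero =>
    have h1 : indepNum (strongPow H 0) ≤ 1 := by
      have := indepNum_le_card (strongPow H 0)
      simpa using this
    rw [pow_zero]
    exact_mod_cast h1
  | succ k => exact alpha_le_capacity_pow H k

lemma capacity_sum_le {V : Type u₁} {W : Type u₂} [Fintype V] [Fintype W]
    (G : SimpleGraph V) (H : SimpleGraph W) :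
    shannonCapacity (G ⊕g H) ≤ fracIndepNum G + shannonCapacity H := by
  have hF0 := fracIndepNum_nonneg G
  have hB0 := capacity_nonneg_s1 H
  refine capacity_le_s1 _ (by linarith) (fun k => ?_)
  have hm := master G H (k+1) (κ := PUnit.{max u₁ u₂ + 1}) (⊥ : SimpleGraph PUnit.{max u₁ u₂ + 1})
  rw [alpha_unit] at hm
  calc (indepNum (strongPow (G ⊕g H) (k+1)) : ℝ)
      ≤ ∑ l ∈ Finset.range (k+1+1), ((k+1).choose l : ℝ) * fracIndepNum G ^ (k+1-l)
          * (indepNum (strongProd (strongPow H l) (⊥ : SimpleGraph PUnit.{max u₁ u₂ + 1})) : ℝ) := hm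
    _ ≤ ∑ l ∈ Finset.range (k+1+1), ((k+1).choose l : ℝ) * fracIndepNum G ^ (k+1-l)
          * shannonCapacity H ^ l := by
        refine Finset.sum_le_sum (fun l hl => ?_)
        refine mul_le_mul_of_nonneg_left ?_ (by positivity)
        rw [alpha_unit]
        exact alpha_powH_le H l
    _ = (fracIndepNum G + shannonCapacity H) ^ (k+1) := by
        rw [add_comm (fracIndepNum G), add_pow]
        refine Finset.sum_congr rfl (fun l hl => ?_)
        ring

end Upper

section LowerCombinatorics

open SimpleGraph Finset

variable {V W U : Type*}

lemma sum_adj_isLeft {G : SimpleGraph V} {H : SimpleGraph W} {u v : V ⊕ W}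
    (h : (G ⊕g H).Adj u v) : u.isLeft = v.isLeft := by
  cases u <;> cases v <;> simp_all [SimpleGraph.sum_adj]

/-- left embedding into the sum, at the level of strong powers. -/
lemma alpha_pow_sum_left [Fintype V] [Fintype W] (G : SimpleGraph V) (H : SimpleGraph W) (k : ℕ) :
    indepNum (strongPow G k) ≤ indepNum (strongPow (G ⊕g H) k) := by
  refine indepNum_le_of_inj _ (fun x => Sum.inl ∘ x)
    (fun x y h => funext fun i => Sum.inl.inj (congrFun h i)) (fun x y h => ?_)
  rw [strongPow_adj] at h ⊢
  refine ⟨fun e => h.1 (by rw [e]), fun i => ?_⟩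
  exact (sum_cond_ll G H (x i) (y i)).1 (h.2 i)

lemma alpha_pow_sum_right [Fintype V] [Fintype W] (G : SimpleGraph V) (H : SimpleGraph W) (k : ℕ) :
    indepNum (strongPow H k) ≤ indepNum (strongPow (G ⊕g H) k) := by
  refine indepNum_le_of_inj _ (fun x => Sum.inr ∘ x)
    (fun x y h => funext fun i => Sum.inr.inj (congrFun h i)) (fun x y h => ?_)
  rw [strongPow_adj] at h ⊢
  refine ⟨fun e => h.1 (by rw [e]), fun i => ?_⟩
  exact (sum_cond_rr G H (x i) (y i)).1 (h.2 i)

/-- supermultiplicativity of independence numbers of strong powers. -/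
lemma alpha_pow_supermul [Fintype U] (P : SimpleGraph U) (i j : ℕ) :
    indepNum (strongPow P i) * indepNum (strongPow P j) ≤ indepNum (strongPow P (i+j)) := by
  classical
  obtain ⟨s, hs, hscard⟩ := exists_indep (strongPow P i)
  obtain ⟨t, ht, htcard⟩ := exists_indep (strongPow P j)
  rw [← hscard, ← htcard, ← Finset.card_product]
  have hprod : IsIndep (strongProd (strongPow P i) (strongPow P j)) (s ×ˢ t) := by
    intro a ha b hb hab hadj
    rw [Finset.mem_product] at ha hb
    rw [strongProd_adj] at hadj
    by_cases h1 : a.1 = b.1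
    · have h2 : a.2 ≠ b.2 := fun e => hab (Prod.ext h1 e)
      rcases hadj.2.2 with e | hadj2
      · exact h2 e
      · exact ht a.2 ha.2 b.2 hb.2 h2 hadj2
    · rcases hadj.2.1 with e | hadj1
      · exact h1 e
      · exact hs a.1 ha.1 b.1 hb.1 h1 hadj1
  refine card_le_indepNum_of_map (strongPow P (i+j)) hprod
    (fun z => Fin.append z.1 z.2) ?_ ?_
  · intro z _ z' _ he
    have h1 : z.1 = z'.1 := funext fun a => by
      have := congrFun he (Fin.castAdd j a)
      simpa [Fin.append_left] using this
    have h2 : z.2 = z'.2 := funext fun b => by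
      have := congrFun he (Fin.natAdd i b)
      simpa [Fin.append_right] using this
    exact Prod.ext h1 h2
  · intro z _ z' _ hne hadj
    rw [strongPow_adj] at hadj
    rw [strongProd_adj]
    refine ⟨hne, ?_, ?_⟩
    · rw [pow_cond]
      intro a
      have := hadj.2 (Fin.castAdd j a)
      simpa [Fin.append_left] using this
    · rw [pow_cond]
      intro b
      have := hadj.2 (Fin.natAdd i b)
      simpa [Fin.append_right] using this

lemma one_le_alpha_pow_zero [Fintype U] (P : SimpleGraph U) : 1 ≤ indepNum (strongPow P 0) := by
  have hu : IsIndep (strongPow P 0) {(fun i => i.elim0 : Fin 0 → U)} := by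
    intro a ha b hb hab
    exact absurd (Subsingleton.elim a b) hab
  simpa using le_indepNum _ hu

lemma alpha_pow_pow [Fintype U] (P : SimpleGraph U) (a m : ℕ) :
    indepNum (strongPow P a) ^ m ≤ indepNum (strongPow P (a * m)) := by
  induction m with
  | zero => simpa using one_le_alpha_pow_zero P
  | succ m ih =>
    calc indepNum (strongPow P a) ^ (m+1)
        = indepNum (strongPow P a) ^ m * indepNum (strongPow P a) := pow_succ _ _
      _ ≤ indepNum (strongPow P (a*m)) * indepNum (strongPow P a) :=
          Nat.mul_le_mul_right _ ih
      _ ≤ indepNum (strongPow P (a*m + a)) := alpha_pow_supermul P (a*m) a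
      _ = indepNum (strongPow P (a*(m+1))) := rfl

/-- planting independent sets over all patterns of a fixed size. -/
lemma alpha_plant [Fintype V] [Fintype W] (G : SimpleGraph V) (H : SimpleGraph W) (i j : ℕ) :
    (i+j).choose i * (indepNum (strongPow G i) * indepNum (strongPow H j))
      ≤ indepNum (strongPow (G ⊕g H) (i+j)) := by
  classical
  obtain ⟨s, hs, hscard⟩ := exists_indep (strongPow G i)
  obtain ⟨t, ht, htcard⟩ := exists_indep (strongPow H j)
  rw [← hscard, ← htcard]
  set D : Finset (Finset (Fin (i+j))) := Finset.univ.powersetCard i with hD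
  have hDmem : ∀ A : {A // A ∈ D}, A.1.card = i :=
    fun A => (Finset.mem_powersetCard.1 A.2).2
  have hDcmem : ∀ A : {A // A ∈ D}, A.1ᶜ.card = j := by
    intro A
    rw [Finset.card_compl, hDmem A]
    simp
  set ψ : {A // A ∈ D} → ((Fin i → V) × (Fin j → W)) → (Fin (i+j) → V ⊕ W) :=
    fun A xy c =>
      if hc : c ∈ A.1 then Sum.inl (xy.1 ((A.1.orderIsoOfFin (hDmem A)).symm ⟨c, hc⟩))
      else Sum.inr (xy.2 ((A.1ᶜ.orderIsoOfFin (hDcmem A)).symm ⟨c, Finset.mem_compl.2 hc⟩))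
    with hψ
  have hpat : ∀ A xy c, (ψ A xy c).isLeft ↔ c ∈ A.1 := by
    intro A xy c
    by_cases hc : c ∈ A.1 <;> simp [hψ, hc]
  have hevalA : ∀ A xy (a : Fin i),
      ψ A xy ((A.1.orderIsoOfFin (hDmem A)) a : Fin (i+j)) = Sum.inl (xy.1 a) := by
    intro A xy a
    have hc : ((A.1.orderIsoOfFin (hDmem A)) a : Fin (i+j)) ∈ A.1 :=
      ((A.1.orderIsoOfFin (hDmem A)) a).2
    simp only [hψ, dif_pos hc]
    congr 1
    rw [show (⟨((A.1.orderIsoOfFin (hDmem A)) a : Fin (i+j)), hc⟩ : {c // c ∈ A.1})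
        = (A.1.orderIsoOfFin (hDmem A)) a from Subtype.ext rfl]
    rw [OrderIso.symm_apply_apply]
  have hevalB : ∀ A xy (b : Fin j),
      ψ A xy ((A.1ᶜ.orderIsoOfFin (hDcmem A)) b : Fin (i+j)) = Sum.inr (xy.2 b) := by
    intro A xy b
    have hc : ((A.1ᶜ.orderIsoOfFin (hDcmem A)) b : Fin (i+j)) ∈ A.1ᶜ :=
      ((A.1ᶜ.orderIsoOfFin (hDcmem A)) b).2
    have hc' : ¬ ((A.1ᶜ.orderIsoOfFin (hDcmem A)) b : Fin (i+j)) ∈ A.1 :=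
      Finset.mem_compl.1 hc
    simp only [hψ, dif_neg hc']
    congr 1
    rw [show (⟨((A.1ᶜ.orderIsoOfFin (hDcmem A)) b : Fin (i+j)), Finset.mem_compl.2 hc'⟩
        : {c // c ∈ A.1ᶜ}) = (A.1ᶜ.orderIsoOfFin (hDcmem A)) b from Subtype.ext rfl]
    rw [OrderIso.symm_apply_apply]
  have hinj : ∀ A : {A // A ∈ D}, Set.InjOn (ψ A) ((s ×ˢ t : Finset _) : Set _) := by
    intro A xy hxy xy' hxy' he
    have h1 : xy.1 = xy'.1 := funext fun a => by
      have := congrFun he ((A.1.orderIsoOfFin (hDmem A)) a : Fin (i+j))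
      rw [hevalA, hevalA] at this
      exact Sum.inl.inj this
    have h2 : xy.2 = xy'.2 := funext fun b => by
      have := congrFun he ((A.1ᶜ.orderIsoOfFin (hDcmem A)) b : Fin (i+j))
      rw [hevalB, hevalB] at this
      exact Sum.inr.inj this
    exact Prod.ext h1 h2
  have hpatT : ∀ A xy xy' A', ψ A xy = ψ A' xy' → A = A' := by
    intro A xy xy' A' he
    refine Subtype.ext (Finset.ext fun c => ?_)
    rw [← hpat A xy c, ← hpat A' xy' c, he]
  set T : Finset (Fin (i+j) → V ⊕ W) :=
    D.attach.biUnion (fun A => (s ×ˢ t).image (ψ A)) with hT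
  have hdisj : ∀ A ∈ D.attach, ∀ A' ∈ D.attach, A ≠ A' →
      Disjoint ((s ×ˢ t).image (ψ A)) ((s ×ˢ t).image (ψ A')) := by
    intro A _ A' _ hne
    rw [Finset.disjoint_left]
    rintro z hz hz'
    obtain ⟨xy, _, rfl⟩ := Finset.mem_image.1 hz
    obtain ⟨xy', _, he⟩ := Finset.mem_image.1 hz'
    exact hne (hpatT A' xy' xy A he).symm
  have hTcard : T.card = (i+j).choose i * (s.card * t.card) := by
    rw [hT, Finset.card_biUnion hdisj]
    have : ∀ A ∈ D.attach, ((s ×ˢ t).image (ψ A)).card = s.card * t.card := by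
      intro A _
      rw [Finset.card_image_of_injOn (hinj A), Finset.card_product]
    rw [Finset.sum_congr rfl this, Finset.sum_const, Finset.card_attach, smul_eq_mul]
    congr 1
    rw [hD, Finset.card_powersetCard]
    simp
  have hTindep : IsIndep (strongPow (G ⊕g H) (i+j)) T := by
    intro z hz z' hz' hne hadj
    rw [hT, Finset.mem_biUnion] at hz hz'
    obtain ⟨A, -, hz⟩ := hz
    obtain ⟨A', -, hz'⟩ := hz'
    obtain ⟨xy, hxy, rfl⟩ := Finset.mem_image.1 hz
    obtain ⟨xy', hxy', rfl⟩ := Finset.mem_image.1 hz'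
    rw [Finset.mem_product] at hxy hxy'
    rw [strongPow_adj] at hadj
    have hAA : A = A' := by
      refine Subtype.ext (Finset.ext fun c => ?_)
      rw [← hpat A xy c, ← hpat A' xy' c]
      rcases hadj.2 c with e | ha
      · rw [e]
      · rw [sum_adj_isLeft ha]
    subst hAA
    have hxyne : xy ≠ xy' := fun e => hne (by rw [e])
    by_cases h1 : xy.1 = xy'.1
    · have h2 : xy.2 ≠ xy'.2 := fun e => hxyne (Prod.ext h1 e)
      refine ht xy.2 hxy.2 xy'.2 hxy'.2 h2 ?_
      rw [strongPow_adj]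
      refine ⟨h2, fun b => ?_⟩
      have := hadj.2 ((A.1ᶜ.orderIsoOfFin (hDcmem A)) b : Fin (i+j))
      rw [hevalB, hevalB] at this
      rcases this with e | ha
      · exact Or.inl (Sum.inr.inj e)
      · exact (sum_cond_rr G H _ _).1 (Or.inr ha)
    · refine hs xy.1 hxy.1 xy'.1 hxy'.1 h1 ?_
      rw [strongPow_adj]
      refine ⟨h1, fun a => ?_⟩
      have := hadj.2 ((A.1.orderIsoOfFin (hDmem A)) a : Fin (i+j))
      rw [hevalA, hevalA] at this
      rcases this with e | ha
      · exact Or.inl (Sum.inl.inj e)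
      · exact (sum_cond_ll G H _ _).1 (Or.inr ha)
  calc (i+j).choose i * (s.card * t.card) = T.card := hTcard.symm
    _ ≤ indepNum (strongPow (G ⊕g H) (i+j)) := le_indepNum _ hTindep

end LowerCombinatorics
section BinomMode

open Finset

lemma choose_ratio_up {N K l : ℕ} (hl : l + 1 ≤ K) (hKN : K ≤ N) :
    N.choose l * (N - K) ≤ N.choose (l + 1) * K := by
  have h1 : N.choose l * (N - K) * (l + 1) ≤ N.choose (l + 1) * K * (l + 1) := by
    calc N.choose l * (N - K) * (l + 1) = N.choose l * ((N - K) * (l + 1)) := by ring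
      _ ≤ N.choose l * ((N - l) * K) := Nat.mul_le_mul_left _
          (Nat.mul_le_mul (Nat.sub_le_sub_left (Nat.le_of_succ_le hl) N)
            hl)
      _ = N.choose l * (N - l) * K := by ring
      _ = N.choose (l + 1) * (l + 1) * K := by rw [← Nat.choose_succ_right_eq]
      _ = N.choose (l + 1) * K * (l + 1) := by ring
  exact Nat.le_of_mul_le_mul_right h1 (Nat.succ_pos l)

lemma choose_ratio_down {N K l : ℕ} (hl : K ≤ l) (hlN : l + 1 ≤ N) :
    N.choose (l + 1) * K ≤ N.choose l * (N - K) := by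
  have h1 : N.choose (l + 1) * K * (l + 1) ≤ N.choose l * (N - K) * (l + 1) := by
    calc N.choose (l + 1) * K * (l + 1) = N.choose (l + 1) * (l + 1) * K := by ring
      _ = N.choose l * (N - l) * K := by rw [← Nat.choose_succ_right_eq]
      _ = N.choose l * ((N - l) * K) := by ring
      _ ≤ N.choose l * ((N - K) * (l + 1)) := Nat.mul_le_mul_left _
          (Nat.mul_le_mul (Nat.sub_le_sub_left hl N) (le_trans hl (Nat.le_succ l)))
      _ = N.choose l * (N - K) * (l + 1) := by ring
  exact Nat.le_of_mul_le_mul_right h1 (Nat.succ_pos l)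

/-- mode bound: the binomial term at `K` with `p = K/N` is at least `1/(N+1)`. -/
lemma binom_mode (N K : ℕ) (hKN : K ≤ N) (hN : 0 < N) :
    1 ≤ ((N : ℝ) + 1) * (N.choose K : ℝ) * ((K : ℝ) / N) ^ K * (((N - K : ℕ) : ℝ) / N) ^ (N - K) := by
  set p : ℝ := (K : ℝ) / N with hp
  set q : ℝ := ((N - K : ℕ) : ℝ) / N with hq
  have hNR : (0 : ℝ) < N := by exact_mod_cast hN
  have hp0 : 0 ≤ p := by positivity
  have hq0 : 0 ≤ q := by positivity
  have hpq : p + q = 1 := by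
    rw [hp, hq, ← add_div, div_eq_one_iff_eq hNR.ne']
    rw [← Nat.cast_add, Nat.add_sub_cancel' hKN]
  set T : ℕ → ℝ := fun l => (N.choose l : ℝ) * p ^ l * q ^ (N - l) with hT
  -- single steps
  have step_up : ∀ l, l + 1 ≤ K → T l ≤ T (l + 1) := by
    intro l hl
    have hlN : l + 1 ≤ N := le_trans hl hKN
    have hnat : N.choose l * (N - K) ≤ N.choose (l + 1) * K := choose_ratio_up hl hKN
    have hreal : (N.choose l : ℝ) * q ≤ (N.choose (l + 1) : ℝ) * p := by
      rw [hp, hq, ← mul_div_assoc, ← mul_div_assoc]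
      exact div_le_div_of_nonneg_right (by exact_mod_cast hnat) hNR.le
    have e1 : T l = ((N.choose l : ℝ) * q) * (p ^ l * q ^ (N - (l + 1))) := by
      simp only [hT]
      rw [show N - l = (N - (l + 1)) + 1 from by omega, pow_succ]
      ring
    have e2 : T (l + 1) = ((N.choose (l + 1) : ℝ) * p) * (p ^ l * q ^ (N - (l + 1))) := by
      simp only [hT]
      rw [pow_succ]
      ring
    rw [e1, e2]
    exact mul_le_mul_of_nonneg_right hreal (by positivity)
  have step_down : ∀ l, K ≤ l → l + 1 ≤ N → T (l + 1) ≤ T l := by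
    intro l hl hlN
    have hnat : N.choose (l + 1) * K ≤ N.choose l * (N - K) := choose_ratio_down hl hlN
    have hreal : (N.choose (l + 1) : ℝ) * p ≤ (N.choose l : ℝ) * q := by
      rw [hp, hq, ← mul_div_assoc, ← mul_div_assoc]
      exact div_le_div_of_nonneg_right (by exact_mod_cast hnat) hNR.le
    have e1 : T l = ((N.choose l : ℝ) * q) * (p ^ l * q ^ (N - (l + 1))) := by
      simp only [hT]
      rw [show N - l = (N - (l + 1)) + 1 from by omega, pow_succ]
      ring
    have e2 : T (l + 1) = ((N.choose (l + 1) : ℝ) * p) * (p ^ l * q ^ (N - (l + 1))) := by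
      simp only [hT]
      rw [pow_succ]
      ring
    rw [e1, e2]
    exact mul_le_mul_of_nonneg_right hreal (by positivity)
  -- all terms are at most T K
  have below : ∀ m, m ≤ K → T (K - m) ≤ T K := by
    intro m
    induction m with
    | zero => intro _; simp
    | succ m ih =>
      intro hm
      have h1 : K - (m + 1) + 1 = K - m := by omega
      calc T (K - (m + 1)) ≤ T (K - (m + 1) + 1) := step_up _ (by omega)
        _ = T (K - m) := by rw [h1]
        _ ≤ T K := ih (by omega)
  have above : ∀ m, K + m ≤ N → T (K + m) ≤ T K := by
    intro m
    induction m with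
    | zero => intro _; simp
    | succ m ih =>
      intro hm
      calc T (K + (m + 1)) = T ((K + m) + 1) := by rw [Nat.add_succ]
        _ ≤ T (K + m) := step_down _ (by omega) (by omega)
        _ ≤ T K := ih (by omega)
  have hmax : ∀ l ∈ Finset.range (N + 1), T l ≤ T K := by
    intro l hl
    rw [Finset.mem_range] at hl
    by_cases hlK : l ≤ K
    · have := below (K - l) (by omega)
      rwa [show K - (K - l) = l from by omega] at this
    · have := above (l - K) (by omega)
      rwa [show K + (l - K) = l from by omega] at this
  have hsum : ∑ l ∈ Finset.range (N + 1), T l = 1 := by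
    have h2 := add_pow p q N
    rw [hpq, one_pow] at h2
    rw [show ∑ l ∈ Finset.range (N + 1), T l
        = ∑ l ∈ Finset.range (N + 1), p ^ l * q ^ (N - l) * (N.choose l : ℝ) from
      Finset.sum_congr rfl (fun l _ => by simp only [hT]; ring), ← h2]
  have hbound : (1 : ℝ) ≤ (N + 1) * T K := by
    calc (1 : ℝ) = ∑ l ∈ Finset.range (N + 1), T l := hsum.symm
      _ ≤ (Finset.range (N + 1)).card • T K := Finset.sum_le_card_nsmul _ _ _ hmax
      _ = (N + 1) * T K := by
          rw [Finset.card_range, nsmul_eq_mul]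
          push_cast
          ring
  calc (1 : ℝ) ≤ (N + 1) * T K := hbound
    _ = ((N : ℝ) + 1) * (N.choose K : ℝ) * p ^ K * q ^ (N - K) := by simp only [hT]; ring

end BinomMode
section Lower

open SimpleGraph Finset Filter Real Topology

lemma le_capacity' {U : Type*} [Fintype U] (P : SimpleGraph U) {m : ℕ} (hm : 1 ≤ m) :
    (indepNum (strongPow P m) : ℝ) ^ ((1:ℝ)/m) ≤ shannonCapacity P := by
  obtain ⟨k, rfl⟩ : ∃ k, m = k + 1 := ⟨m - 1, by omega⟩
  have h := le_capacity P k
  rw [show ((k:ℝ) + 1) = ((k + 1 : ℕ) : ℝ) from by push_cast; ring] at h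
  exact h

lemma capacity_le_of_forall {U : Type*} [Fintype U] (P : SimpleGraph U) {c : ℝ}
    (h : ∀ k : ℕ, (indepNum (strongPow P (k+1)) : ℝ) ^ ((1:ℝ)/(k+1)) ≤ c) :
    shannonCapacity P ≤ c := by
  unfold shannonCapacity
  exact ciSup_le h

lemma capacity_sum_ge {V W : Type*} [Fintype V] [Fintype W]
    (G : SimpleGraph V) (H : SimpleGraph W) :
    shannonCapacity G + shannonCapacity H ≤ shannonCapacity (G ⊕g H) := by
  set C := shannonCapacity (G ⊕g H) with hCdef
  have key : ∀ a b : ℕ,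
      (indepNum (strongPow G (a+1)) : ℝ) ^ ((1:ℝ)/(a+1))
        + (indepNum (strongPow H (b+1)) : ℝ) ^ ((1:ℝ)/(b+1)) ≤ C := by
    intro a b
    set s := indepNum (strongPow G (a+1)) with hs
    set t := indepNum (strongPow H (b+1)) with ht
    by_cases hs0 : s = 0
    · rw [hs0]
      rw [show ((0:ℕ):ℝ) = (0:ℝ) from by norm_num,
        Real.zero_rpow (by positivity : (0:ℝ) < (1:ℝ)/(a+1)).ne', zero_add]
      calc (t:ℝ) ^ ((1:ℝ)/(b+1))
          ≤ (indepNum (strongPow (G ⊕g H) (b+1)) : ℝ) ^ ((1:ℝ)/(b+1)) := by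
            apply Real.rpow_le_rpow (Nat.cast_nonneg _) ?_ (by positivity)
            exact_mod_cast alpha_pow_sum_right G H (b+1)
        _ ≤ C := le_capacity _ b
    by_cases ht0 : t = 0
    · rw [ht0]
      rw [show ((0:ℕ):ℝ) = (0:ℝ) from by norm_num,
        Real.zero_rpow (by positivity : (0:ℝ) < (1:ℝ)/(b+1)).ne', add_zero]
      calc (s:ℝ) ^ ((1:ℝ)/(a+1))
          ≤ (indepNum (strongPow (G ⊕g H) (a+1)) : ℝ) ^ ((1:ℝ)/(a+1)) := by
            apply Real.rpow_le_rpow (Nat.cast_nonneg _) ?_ (by positivity)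
            exact_mod_cast alpha_pow_sum_left G H (a+1)
        _ ≤ C := le_capacity _ a
    -- main case
    have hs1 : 1 ≤ s := Nat.one_le_iff_ne_zero.2 hs0
    have ht1 : 1 ≤ t := Nat.one_le_iff_ne_zero.2 ht0
    set x' : ℝ := (s:ℝ) ^ ((1:ℝ)/(a+1)) with hx'
    set y' : ℝ := (t:ℝ) ^ ((1:ℝ)/(b+1)) with hy'
    have hx'1 : 1 ≤ x' := by
      rw [hx']
      calc (1:ℝ) = (1:ℝ) ^ ((1:ℝ)/(a+1)) := (Real.one_rpow _).symm
        _ ≤ (s:ℝ) ^ ((1:ℝ)/(a+1)) :=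
            Real.rpow_le_rpow zero_le_one (by exact_mod_cast hs1) (by positivity)
    have hy'1 : 1 ≤ y' := by
      rw [hy']
      calc (1:ℝ) = (1:ℝ) ^ ((1:ℝ)/(b+1)) := (Real.one_rpow _).symm
        _ ≤ (t:ℝ) ^ ((1:ℝ)/(b+1)) :=
            Real.rpow_le_rpow zero_le_one (by exact_mod_cast ht1) (by positivity)
    have hx'0 : (0:ℝ) < x' := lt_of_lt_of_le one_pos hx'1
    have hy'0 : (0:ℝ) < y' := lt_of_lt_of_le one_pos hy'1
    have hxy0 : (0:ℝ) < x' + y' := by linarith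
    set lam : ℝ := x' / (x' + y') with hlam
    have hlam0 : 0 < lam := by rw [hlam]; positivity
    have hlam1 : lam < 1 := by rw [hlam, div_lt_one hxy0]; linarith
    set d : ℕ := (a+1)*(b+1) with hd
    have hdpos : 0 < d := by positivity
    -- ℕ-level planted bound
    have plant : ∀ n j : ℕ, j ≤ n →
        (d*n).choose (d*j) * (s ^ ((b+1)*j) * t ^ ((a+1)*(n-j)))
          ≤ indepNum (strongPow (G ⊕g H) (d*n)) := by
      intro n j hj
      have e1 : s ^ ((b+1)*j) ≤ indepNum (strongPow G (d*j)) := by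
        have h := alpha_pow_pow G (a+1) ((b+1)*j)
        rwa [← hs, show (a+1)*((b+1)*j) = d*j from by rw [hd]; ring] at h
      have e2 : t ^ ((a+1)*(n-j)) ≤ indepNum (strongPow H (d*(n-j))) := by
        have h := alpha_pow_pow H (b+1) ((a+1)*(n-j))
        rwa [← ht, show (b+1)*((a+1)*(n-j)) = d*(n-j) from by rw [hd]; ring] at h
      have e3 := alpha_plant G H (d*j) (d*(n-j))
      rw [show d*j + d*(n-j) = d*n from by rw [← Nat.mul_add, Nat.add_sub_cancel' hj]] at e3
      calc (d*n).choose (d*j) * (s ^ ((b+1)*j) * t ^ ((a+1)*(n-j)))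
          ≤ (d*n).choose (d*j)
              * (indepNum (strongPow G (d*j)) * indepNum (strongPow H (d*(n-j)))) :=
            Nat.mul_le_mul_left _ (Nat.mul_le_mul e1 e2)
        _ ≤ indepNum (strongPow (G ⊕g H) (d*n)) := e3
    -- the comparison sequence
    set p : ℕ → ℝ := fun n => ((⌊lam * n⌋₊ : ℝ) / n) with hp
    set w3 : ℕ → ℝ := fun m => Real.exp (-(Real.log ((m:ℝ)+1) / (m:ℝ))) with hw3
    set w : ℕ → ℝ := fun n =>
      (x' / p n) ^ (p n) * (y' / (1 - p n)) ^ (1 - p n) * w3 (d*n) with hw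
    -- limit of w is x' + y'
    have hptend : Tendsto p atTop (𝓝 lam) := by
      rw [hp]
      have h := (tendsto_nat_floor_mul_div_atTop (a := lam) hlam0.le).comp
        tendsto_natCast_atTop_atTop
      exact h
    have hw3tend : Tendsto w3 atTop (𝓝 1) := by
      rw [hw3]
      have hlog : Tendsto (fun x : ℝ => Real.log (x+1) / x) atTop (𝓝 0) := by
        have h := (Real.tendsto_pow_log_div_mul_add_atTop 1 (-1) 1 one_ne_zero).comp
          (tendsto_atTop_add_const_right atTop 1 tendsto_id)
        refine h.congr (fun x => ?_)
        simp only [Function.comp_apply, pow_one, one_mul, id]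
        congr 1
        ring
      have hlogn : Tendsto (fun m : ℕ => Real.log ((m:ℝ)+1) / (m:ℝ)) atTop (𝓝 0) :=
        hlog.comp tendsto_natCast_atTop_atTop
      have hneg : Tendsto (fun m : ℕ => -(Real.log ((m:ℝ)+1) / (m:ℝ))) atTop (𝓝 0) := by
        simpa using hlogn.neg
      have h := (Real.continuous_exp.tendsto 0).comp hneg
      rw [Real.exp_zero] at h
      exact h
    have hw3d : Tendsto (fun n : ℕ => w3 (d*n)) atTop (𝓝 1) := by
      refine hw3tend.comp (tendsto_atTop_mono (fun n => ?_) tendsto_id)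
      exact Nat.le_mul_of_pos_left n hdpos
    have hcont : Tendsto (fun n : ℕ => (x' / p n) ^ (p n) * (y' / (1 - p n)) ^ (1 - p n))
        atTop (𝓝 ((x' / lam) ^ lam * (y' / (1 - lam)) ^ (1 - lam))) := by
      have h1lam : (0:ℝ) < 1 - lam := by linarith
      have c1 : ContinuousAt (fun z : ℝ => (x' / z) ^ z) lam := by
        refine ContinuousAt.rpow ?_ continuousAt_id ?_
        · exact continuousAt_const.div continuousAt_id hlam0.ne'
        · left
          exact (div_pos hx'0 hlam0).ne'
      have c2 : ContinuousAt (fun z : ℝ => (y' / (1 - z)) ^ (1 - z)) lam := by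
        refine ContinuousAt.rpow ?_ (continuousAt_const.sub continuousAt_id) ?_
        · exact continuousAt_const.div (continuousAt_const.sub continuousAt_id) h1lam.ne'
        · left
          exact (div_pos hy'0 h1lam).ne'
      exact (c1.mul c2).tendsto.comp hptend
    have hval : (x' / lam) ^ lam * (y' / (1 - lam)) ^ (1 - lam) = x' + y' := by
      have h1 : x' / lam = x' + y' := by
        rw [hlam]
        field_simp
      have h2 : y' / (1 - lam) = x' + y' := by
        have e : 1 - lam = y' / (x' + y') := by
          rw [hlam]
          field_simp
          ring
        rw [e, div_div_eq_mul_div, mul_comm, mul_div_assoc, div_self hy'0.ne', mul_one]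
      rw [h1, h2, ← Real.rpow_add hxy0, show lam + (1 - lam) = 1 from by ring, Real.rpow_one]
    have hlim : Tendsto w atTop (𝓝 (x' + y')) := by
      rw [hw]
      have h := hcont.mul hw3d
      rw [mul_one, hval] at h
      exact h
    -- eventual bound w n ≤ C
    have hev : ∀ᶠ n : ℕ in atTop, w n ≤ C := by
      have hev1 : ∀ᶠ n : ℕ in atTop, (1:ℝ) ≤ lam * n := by
        have h : Tendsto (fun n : ℕ => lam * (n:ℝ)) atTop atTop :=
          tendsto_natCast_atTop_atTop.const_mul_atTop hlam0
        exact h.eventually_ge_atTop 1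
      filter_upwards [hev1, eventually_ge_atTop 1] with n h1n hn1
      set j : ℕ := ⌊lam * n⌋₊ with hj
      have hnR : (0:ℝ) < n := by exact_mod_cast hn1
      have hj1 : 1 ≤ j := Nat.le_floor (by exact_mod_cast h1n)
      have hjn : j < n := by
        have h1 : (j:ℝ) ≤ lam * n := Nat.floor_le (by positivity)
        have h2 : lam * n < 1 * n := by
          exact mul_lt_mul_of_pos_right hlam1 hnR
        rw [one_mul] at h2
        exact_mod_cast lt_of_le_of_lt h1 h2
      have hpn : p n = (j:ℝ)/n := by rw [hp]
      have hpn0 : 0 < p n := by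
        rw [hpn]
        have : (0:ℝ) < (j:ℝ) := by exact_mod_cast hj1
        positivity
      have hpn1 : p n < 1 := by
        rw [hpn, div_lt_one hnR]
        exact_mod_cast hjn
      have h1p : 0 < 1 - p n := by linarith
      -- cast identities
      have hKN : d*j ≤ d*n := Nat.mul_le_mul_left d hjn.le
      have hNpos : 0 < d*n := Nat.mul_pos hdpos (by omega)
      have hNR : (0:ℝ) < ((d*n : ℕ):ℝ) := by exact_mod_cast hNpos
      have hcast1 : ((d*j : ℕ):ℝ) / ((d*n : ℕ):ℝ) = p n := by
        rw [hpn]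
        push_cast
        rw [mul_comm (d:ℝ) (j:ℝ), mul_comm (d:ℝ) (n:ℝ), mul_div_mul_right _ _
          (by exact_mod_cast hdpos.ne' : (d:ℝ) ≠ 0)]
      have hcast2 : ((d*n - d*j : ℕ):ℝ) / ((d*n : ℕ):ℝ) = 1 - p n := by
        rw [Nat.cast_sub hKN]
        rw [sub_div, div_self hNR.ne', hcast1]
      -- binomial mode bound, rewritten
      have hbin := binom_mode (d*n) (d*j) hKN hNpos
      rw [hcast1, hcast2] at hbin
      -- step A
      have hdiv1 : 0 < x' / p n := div_pos hx'0 hpn0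
      have hdiv2 : 0 < y' / (1 - p n) := div_pos hy'0 h1p
      have hA : (x' / p n) ^ (d*j) * (y' / (1 - p n)) ^ (d*n - d*j) * (((d*n:ℕ):ℝ)+1)⁻¹
          ≤ ((d*n).choose (d*j) : ℝ) * x' ^ (d*j) * y' ^ (d*n - d*j) := by
        have hLHSe : (x' / p n) ^ (d*j) * (y' / (1 - p n)) ^ (d*n - d*j) * (((d*n:ℕ):ℝ)+1)⁻¹
            = x' ^ (d*j) * y' ^ (d*n - d*j)
              / ((p n) ^ (d*j) * (1 - p n) ^ (d*n - d*j) * (((d*n:ℕ):ℝ)+1)) := by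
          rw [div_pow x' (p n) (d*j), div_pow y' (1 - p n) (d*n - d*j), div_mul_div_comm,
            ← div_eq_mul_inv, div_div]
        rw [hLHSe, div_le_iff₀ (by positivity)]
        calc x' ^ (d*j) * y' ^ (d*n - d*j)
            = (x' ^ (d*j) * y' ^ (d*n - d*j)) * 1 := (mul_one _).symm
          _ ≤ (x' ^ (d*j) * y' ^ (d*n - d*j))
              * ((((d*n:ℕ):ℝ)+1) * ((d*n).choose (d*j) : ℝ) * (p n) ^ (d*j)
                * (1 - p n) ^ (d*n - d*j)) := by
              refine mul_le_mul_of_nonneg_left hbin ?_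
              exact mul_nonneg (pow_nonneg hx'0.le _) (pow_nonneg hy'0.le _)
          _ = ((d*n).choose (d*j) : ℝ) * x' ^ (d*j) * y' ^ (d*n - d*j)
              * ((p n) ^ (d*j) * (1 - p n) ^ (d*n - d*j) * (((d*n:ℕ):ℝ)+1)) := by ring
      -- w n equals the (1/N)-th root of the LHS
      have i1 : ((x' / p n) ^ (d*j) : ℝ) ^ ((1:ℝ)/((d*n:ℕ):ℝ)) = (x' / p n) ^ (p n) := by
        rw [← Real.rpow_natCast (x' / p n) (d*j), ← Real.rpow_mul hdiv1.le]
        congr 1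
        rw [mul_one_div, hcast1]
      have i2 : ((y' / (1 - p n)) ^ (d*n - d*j) : ℝ) ^ ((1:ℝ)/((d*n:ℕ):ℝ))
          = (y' / (1 - p n)) ^ (1 - p n) := by
        rw [← Real.rpow_natCast (y' / (1 - p n)) (d*n - d*j), ← Real.rpow_mul hdiv2.le]
        congr 1
        rw [mul_one_div, hcast2]
      have i3 : ((((d*n:ℕ):ℝ)+1)⁻¹) ^ ((1:ℝ)/((d*n:ℕ):ℝ)) = w3 (d*n) := by
        simp only [hw3]
        rw [← Real.rpow_neg_one (((d*n:ℕ):ℝ)+1), ← Real.rpow_mul (by positivity),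
          Real.rpow_def_of_pos (by positivity)]
        congr 1
        ring
      have hWe : w n = ((x' / p n) ^ (d*j) * (y' / (1 - p n)) ^ (d*n - d*j)
          * (((d*n:ℕ):ℝ)+1)⁻¹) ^ ((1:ℝ)/((d*n:ℕ):ℝ)) := by
        rw [Real.mul_rpow (by positivity) (by positivity),
          Real.mul_rpow (pow_nonneg hdiv1.le _) (pow_nonneg hdiv2.le _), i1, i2, i3, hw]
      -- chain to C
      have hxK : x' ^ (d*j) = (s:ℝ) ^ ((b+1)*j) := by
        rw [hx', ← Real.rpow_natCast ((s:ℝ) ^ ((1:ℝ)/(a+1))) (d*j),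
          ← Real.rpow_mul (Nat.cast_nonneg s), ← Real.rpow_natCast (s:ℝ) ((b+1)*j)]
        congr 1
        rw [hd]
        push_cast
        field_simp
      have hyK : y' ^ (d*n - d*j) = (t:ℝ) ^ ((a+1)*(n-j)) := by
        rw [show d*n - d*j = d*(n-j) from (Nat.mul_sub d n j).symm]
        rw [hy', ← Real.rpow_natCast ((t:ℝ) ^ ((1:ℝ)/(b+1))) (d*(n-j)),
          ← Real.rpow_mul (Nat.cast_nonneg t), ← Real.rpow_natCast (t:ℝ) ((a+1)*(n-j))]
        congr 1
        rw [hd]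
        push_cast
        field_simp
      have hcastle : ((d*n).choose (d*j) : ℝ) * x' ^ (d*j) * y' ^ (d*n - d*j)
          ≤ (indepNum (strongPow (G ⊕g H) (d*n)) : ℝ) := by
        rw [hxK, hyK, mul_assoc]
        exact_mod_cast plant n j hjn.le
      have hfinal : w n ≤ C := by
        rw [hWe]
        calc ((x' / p n) ^ (d*j) * (y' / (1 - p n)) ^ (d*n - d*j)
            * (((d*n:ℕ):ℝ)+1)⁻¹) ^ ((1:ℝ)/((d*n:ℕ):ℝ))
            ≤ (((d*n).choose (d*j) : ℝ) * x' ^ (d*j) * y' ^ (d*n - d*j))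
                ^ ((1:ℝ)/((d*n:ℕ):ℝ)) := by
              refine Real.rpow_le_rpow ?_ hA (by positivity)
              positivity
          _ ≤ ((indepNum (strongPow (G ⊕g H) (d*n)) : ℝ)) ^ ((1:ℝ)/((d*n:ℕ):ℝ)) := by
              refine Real.rpow_le_rpow ?_ hcastle (by positivity)
              exact mul_nonneg (mul_nonneg (Nat.cast_nonneg _) (pow_nonneg hx'0.le _))
                (pow_nonneg hy'0.le _)
          _ ≤ C := le_capacity' _ (by omega : 1 ≤ d*n)
      exact hfinal
    exact le_of_tendsto hlim hev
  -- conclude from key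
  have h1 : ∀ a : ℕ,
      (indepNum (strongPow G (a+1)) : ℝ) ^ ((1:ℝ)/(a+1)) ≤ C - shannonCapacity H := by
    intro a
    have h2 : shannonCapacity H
        ≤ C - (indepNum (strongPow G (a+1)) : ℝ) ^ ((1:ℝ)/(a+1)) := by
      refine capacity_le_of_forall H (fun b => ?_)
      have := key a b
      linarith
    linarith
  have h3 : shannonCapacity G ≤ C - shannonCapacity H := capacity_le_of_forall G h1
  linarith

end Lower
theorem capacity_additive_of_eq_fracIndepNum
    {V : Type*} [Fintype V] (G₁ : SimpleGraph V)
    (h : shannonCapacity G₁ = fracIndepNum G₁) :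
    ∀ {W : Type*} [Fintype W] (G₂ : SimpleGraph W),
      shannonCapacity (G₁ ⊕g G₂) = shannonCapacity G₁ + shannonCapacity G₂ := by
  intro W _ G₂
  have hle := capacity_sum_le G₁ G₂
  rw [← h] at hle
  exact le_antisymm hle (capacity_sum_ge G₁ G₂)

end Paper
end

section
/- Let q be a prime power and n ≥ 2k ≥ 2. If λ_max = q^{k²}·[n−k choose k]_q and λ_min = −q^{k²−k}·[n−k−1 choose k−1]_q are the largest and smallest adjacency eigenvalues of the q-Kneser graph qK(n,k) on N = [n choose k]_q vertices, then the ratio bound value −N·λ_min/(λ_max − λ_min) equals [n−1 choose k−1]_q. -/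
namespace Paper

/-- The Gaussian (q-binomial) coefficient `[n choose k]_q` as a rational number. -/
def gaussBinom (n k q : ℕ) : ℚ :=
  ∏ i ∈ Finset.range k, (((q : ℚ) ^ n - (q : ℚ) ^ i) / ((q : ℚ) ^ k - (q : ℚ) ^ i))

/-! Pascal's rule `[n+1 choose k+1]_q = (q^(n+1) - 1)/(q^(k+1) - 1) · [n choose k]_q` turns
`λ_max - λ_min` into `-λ_min · (q^n - 1)/(q^k - 1)`, and the same rule cancels the remaining
factor `(q^n - 1)/(q^k - 1)` against `[n choose k]_q`. -/

def qKneserMaxEigenvalue (n k q : ℕ) : ℚ :=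
  (q : ℚ) ^ (k ^ 2) * gaussBinom (n - k) k q

def qKneserMinEigenvalue (n k q : ℕ) : ℚ :=
  -((q : ℚ) ^ (k ^ 2 - k) * gaussBinom (n - k - 1) (k - 1) q)

section

variable {q : ℕ}

lemma gaussBinom_pos (hq : 1 < q) {n k : ℕ} (h : k ≤ n) : 0 < gaussBinom n k q := by
  have hq' : (1 : ℚ) < q := by exact_mod_cast hq
  refine Finset.prod_pos fun i hi => div_pos ?_ ?_ <;>
    exact sub_pos.2 (pow_lt_pow_right₀ hq' (by grind))

lemma gaussBinom_succ_succ (hq : q ≠ 0) (n k : ℕ) :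
    gaussBinom (n + 1) (k + 1) q
      = ((q : ℚ) ^ (n + 1) - 1) / ((q : ℚ) ^ (k + 1) - 1) * gaussBinom n k q := by
  rw [gaussBinom, Finset.prod_range_succ', mul_comm, gaussBinom, pow_zero]
  congr 1
  refine Finset.prod_congr rfl fun i _ => ?_
  -- every other factor is `q (q^n - q^i) / (q (q^k - q^i))`
  simp only [pow_succ, ← sub_mul]
  exact mul_div_mul_right _ _ (by exact_mod_cast hq)

lemma pow_sub_one_ne_zero (hq : 1 < q) {m : ℕ} (hm : m ≠ 0) : (q : ℚ) ^ m - 1 ≠ 0 :=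
  sub_ne_zero.2 (one_lt_pow₀ (by exact_mod_cast hq) hm).ne'

lemma qKneserMaxEigenvalue_sub_minEigenvalue (hq : 1 < q) {n k : ℕ} (hk : 1 ≤ k) (hkn : k < n) :
    qKneserMaxEigenvalue n k q - qKneserMinEigenvalue n k q
      = -qKneserMinEigenvalue n k q * (((q : ℚ) ^ n - 1) / ((q : ℚ) ^ k - 1)) := by
  obtain ⟨r, rfl⟩ : ∃ r, k = r + 1 := ⟨k - 1, by omega⟩
  obtain ⟨s, rfl⟩ : ∃ s, n = s + r + 2 := ⟨n - r - 2, by omega⟩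
  have hsq : (r + 1) ^ 2 = (r ^ 2 + r) + (r + 1) := by ring
  have hsq' : (r + 1) ^ 2 - (r + 1) = r ^ 2 + r := by omega
  have hs : s + r + 2 - (r + 1) = s + 1 := by omega
  rw [qKneserMaxEigenvalue, qKneserMinEigenvalue, hsq', hsq, hs, Nat.add_sub_cancel,
    Nat.add_sub_cancel, gaussBinom_succ_succ (by omega)]
  have := pow_sub_one_ne_zero hq (m := r + 1) (by omega)
  field_simp
  ring

end

theorem qKneser_ratio_bound (q n k : ℕ) (hq : IsPrimePow q) (hk : 1 ≤ k)
    (hnk : 2 * k ≤ n) :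
    -(gaussBinom n k q) * (-((q : ℚ) ^ (k ^ 2 - k) * gaussBinom (n - k - 1) (k - 1) q)) /
        ((q : ℚ) ^ (k ^ 2) * gaussBinom (n - k) k q
          - (-((q : ℚ) ^ (k ^ 2 - k) * gaussBinom (n - k - 1) (k - 1) q)))
      = gaussBinom (n - 1) (k - 1) q := by
  have hq1 : 1 < q := hq.one_lt
  have hmin : qKneserMinEigenvalue n k q ≠ 0 :=
    neg_ne_zero.2 (mul_ne_zero (by positivity) (gaussBinom_pos hq1 (by omega)).ne')
  change -(gaussBinom n k q) * qKneserMinEigenvalue n k q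
      / (qKneserMaxEigenvalue n k q - qKneserMinEigenvalue n k q) = _
  rw [qKneserMaxEigenvalue_sub_minEigenvalue hq1 hk (by omega)]
  obtain ⟨r, rfl⟩ : ∃ r, k = r + 1 := ⟨k - 1, by omega⟩
  obtain ⟨m, rfl⟩ : ∃ m, n = m + 1 := ⟨n - 1, by omega⟩
  rw [gaussBinom_succ_succ (by omega), Nat.add_sub_cancel, Nat.add_sub_cancel]
  have := pow_sub_one_ne_zero hq1 (m := r + 1) (by omega)
  have := pow_sub_one_ne_zero hq1 (m := m + 1) (by omega)
  field_simp

end Paper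
end
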